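/- arXiv:2007.07772 — 4 statements merged into one kernel-verified Lean document; each statement's English description precedes it below -/
import Mathlib

section
/- For any fixed δ ∈ (0, 1/2] there exist constants C > 0 and c > 0 such that for all positive integers n, k, s satisfying k ≥ C·n^{1/2+δ}·s^{1/2−δ}, there exists a function Ext : {0,1}^n → {0,1}^m with output length m = ⌊n^c⌋ such that for every space-s source X over {0,1}^n with min-entropy at least k, the statistical distance between Ext(X) and the uniform distribution on {0,1}^m is at most 2^{−n^c}. -/
open Finset

section Prelim

variable {α β : Type*}

/-- Min-entropy `H∞(X) = -log₂ max_x Pr[X = x]`. -/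
noncomputable def minEntropy [Fintype α] (X : α → ℝ) : ℝ :=
  - Real.logb 2 (⨆ a, X a)

/-- Statistical distance: `max_{S} |Pr[X ∈ S] - Pr[Y ∈ S]|`. -/
noncomputable def statDist [Fintype α] (X Y : α → ℝ) : ℝ :=
  ⨆ S : Finset α, |∑ a ∈ S, (X a - Y a)|

/-- The uniform distribution on a finite type. -/
noncomputable def uniformDist (α : Type*) [Fintype α] : α → ℝ :=
  fun _ => (Fintype.card α : ℝ)⁻¹

open Classical in
/-- Distribution of `f(X)` where `X` is distributed according to `X`. -/
noncomputable def pushforward [Fintype α] (X : α → ℝ) (f : α → β) : β → ℝ :=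
  fun b => ∑ a, if f a = b then X a else 0

/-- A width-`w`, length-`n` branching program source: a single start state, and for each
layer `i` and state, a probability distribution over (next state, output bit) pairs. -/
structure BPSource (w n : ℕ) where
  start : Fin w
  trans : ℕ → Fin w → Fin w → ZMod 2 → ℝ
  nonneg : ∀ i u v b, 0 ≤ trans i u v b
  sum_one : ∀ i u, ∑ v, ∑ b, trans i u v b = 1

/-- The probability that the random walk on the branching program outputs the string `x`. -/
noncomputable def BPSource.prob {w n : ℕ} (B : BPSource w n) (x : Fin n → ZMod 2) : ℝ :=
  ∑ path : Fin n → Fin w, ∏ i : Fin n,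
    B.trans i.val
      (if h : i.val = 0 then B.start else path ⟨i.val - 1, by have := i.isLt; omega⟩)
      (path i) (x i)

/-- A space-`s` source over `{0,1}ⁿ`: a distribution generated by a width-`2^s`,
length-`n` branching program source. -/
def IsSpaceSource (s n : ℕ) (X : (Fin n → ZMod 2) → ℝ) : Prop :=
  ∃ B : BPSource (2 ^ s) n, ∀ x, X x = B.prob x

end Prelim

/-!
The extractor is found by the probabilistic method. Rounding every transition probability of a
width-`2^s` branching program down to a multiple of `2⁻ᵃ` moves its output distribution little in
`ℓ¹` and lands in a finite net of sub-distributions `Q`. By Hoeffding's inequality a uniformly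
random `Ext` makes `∑ₓ Q x (𝟙[Ext x = b] - 2⁻ᵐ)` small except with probability
`exp (-t² / (2 ∑ₓ Q x ²))`, and `∑ₓ Q x ² ≤ 2⁻ᵏ` when the source has min-entropy `k`. A union bound
over the net and the outputs `b` yields one `Ext` that works for every space-`s` source. With
`C = 64` and `c = 1/2` the hypothesis forces `k ≥ 64 √n` and `k ≥ 4 s` (when `k ≤ n`; otherwise no
source qualifies), which pays for the union bound.
-/

theorem prod_sub_prod_le_sum_sub {ι : Type*} (s : Finset ι) {f g : ι → ℝ}
    (hg : ∀ i ∈ s, 0 ≤ g i) (hgf : ∀ i ∈ s, g i ≤ f i) (hf : ∀ i ∈ s, f i ≤ 1) :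
    ∏ i ∈ s, f i - ∏ i ∈ s, g i ≤ ∑ i ∈ s, (f i - g i) := by
  induction s using Finset.cons_induction with
  | empty => simp
  | cons j s hj ih =>
    simp only [forall_mem_cons] at hg hgf hf
    have hgs : ∏ i ∈ s, g i ≤ ∏ i ∈ s, f i := prod_le_prod hg.2 fun i hi => hgf.2 i hi
    have hgs1 : ∏ i ∈ s, g i ≤ 1 := prod_le_one hg.2 fun i hi => (hgf.2 i hi).trans (hf.2 i hi)
    have := prod_nonneg hg.2
    rw [prod_cons, prod_cons, sum_cons]
    nlinarith [ih hg.2 hgf.2 hf.2]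

theorem Fin.sum_pi_snoc {n : ℕ} {γ : Type*} [Fintype γ] (f : (Fin (n + 1) → γ) → ℝ) :
    ∑ p, f p = ∑ p : Fin n → γ, ∑ c, f (Fin.snoc p c) := by
  rw [← (Fin.snocEquiv fun _ => γ).sum_comp, Fintype.sum_prod_type, sum_comm]
  rfl

section Walk

variable {σ β : Type*} {n : ℕ}

def walkWeight (T : ℕ → σ → σ → β → ℝ) (u₀ : σ) (path : Fin n → σ) (x : Fin n → β) : ℝ :=
  ∏ i : Fin n,
    T i.val (if h : i.val = 0 then u₀ else path ⟨i.val - 1, by have := i.isLt; omega⟩)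
      (path i) (x i)

/-- `BPSource.prob` for an arbitrary table `T`, which need not be stochastic: the rounded tables
of the net below are not. -/
noncomputable def walkProb [Fintype σ] (T : ℕ → σ → σ → β → ℝ) (u₀ : σ) (x : Fin n → β) : ℝ :=
  ∑ path, walkWeight T u₀ path x

theorem BPSource.prob_eq_walkProb {w : ℕ} (B : BPSource w n) : B.prob = walkProb B.trans B.start :=
  rfl

theorem walkWeight_snoc (T : ℕ → σ → σ → β → ℝ) (u₀ : σ) (path : Fin n → σ) (v : σ)
    (x : Fin n → β) (b : β) :
    walkWeight T u₀ (Fin.snoc path v) (Fin.snoc x b)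
      = walkWeight T u₀ path x * T n (if h : n = 0 then u₀ else path ⟨n - 1, by omega⟩) v b := by
  have hprev (j : ℕ) (hj : j < n) :
      (Fin.snoc path v : Fin (n + 1) → σ) ⟨j, by omega⟩ = path ⟨j, hj⟩ :=
    Fin.snoc_castSucc (α := fun _ => σ) (i := ⟨j, hj⟩) ..
  rw [walkWeight, Fin.prod_univ_castSucc]
  congr 1
  · refine prod_congr rfl fun i _ => ?_
    simp only [Fin.val_castSucc, Fin.snoc_castSucc]
    split_ifs
    · rfl
    · rw [hprev]
  · simp only [Fin.val_last, Fin.snoc_last]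
    split_ifs
    · rfl
    · rw [hprev]

variable [Fintype σ]

theorem sum_walkProb [Fintype β] {T : ℕ → σ → σ → β → ℝ} (hT : ∀ i u, ∑ v, ∑ b, T i u v b = 1)
    (u₀ : σ) : ∀ n, ∑ x : Fin n → β, walkProb T u₀ x = 1
  | 0 => by simp [walkProb, walkWeight]
  | n + 1 => by
    simp only [walkProb, Fin.sum_pi_snoc (γ := β), Fin.sum_pi_snoc (γ := σ), walkWeight_snoc]
    rw [← sum_walkProb hT u₀ n]
    refine sum_congr rfl fun x _ => ?_
    rw [sum_comm, walkProb]
    refine sum_congr rfl fun path _ => ?_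
    rw [sum_comm]
    simp only [← mul_sum, hT, mul_one]

theorem walkProb_nonneg {T : ℕ → σ → σ → β → ℝ} (hT : ∀ i u v b, 0 ≤ T i u v b) (u₀ : σ)
    (x : Fin n → β) : 0 ≤ walkProb T u₀ x :=
  sum_nonneg fun _ _ => prod_nonneg fun _ _ => hT ..

theorem walkProb_le_walkProb {T T' : ℕ → σ → σ → β → ℝ} (h0 : ∀ i u v b, 0 ≤ T' i u v b)
    (hle : ∀ i u v b, T' i u v b ≤ T i u v b) (u₀ : σ) (x : Fin n → β) :
    walkProb T' u₀ x ≤ walkProb T u₀ x :=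
  sum_le_sum fun _ _ => prod_le_prod (fun _ _ => h0 ..) fun _ _ => hle ..

theorem walkProb_sub_walkProb_le {T T' : ℕ → σ → σ → β → ℝ} {η : ℝ}
    (h0 : ∀ i u v b, 0 ≤ T' i u v b) (hle : ∀ i u v b, T' i u v b ≤ T i u v b)
    (h1 : ∀ i u v b, T i u v b ≤ 1) (hη : ∀ i u v b, T i u v b - T' i u v b ≤ η) (u₀ : σ)
    (x : Fin n → β) :
    walkProb T u₀ x - walkProb T' u₀ x ≤ Fintype.card σ ^ n * (n * η) := by
  rw [walkProb, walkProb, ← sum_sub_distrib]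
  refine (sum_le_sum fun path _ => (prod_sub_prod_le_sum_sub univ (fun _ _ => h0 ..)
    (fun _ _ => hle ..) fun _ _ => h1 ..).trans (sum_le_sum fun _ _ => hη ..)).trans_eq ?_
  simp

theorem walkProb_congr {T T' : ℕ → σ → σ → β → ℝ} (h : ∀ i < n, T i = T' i) (u₀ : σ)
    (x : Fin n → β) : walkProb T u₀ x = walkProb T' u₀ x := by
  simp only [walkProb, walkWeight, h _ (Fin.isLt _)]

end Walk

theorem BPSource.trans_le_one {w n : ℕ} (B : BPSource w n) (i : ℕ) (u v : Fin w) (b : ZMod 2) :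
    B.trans i u v b ≤ 1 := by
  calc B.trans i u v b ≤ ∑ b', B.trans i u v b' :=
        single_le_sum (fun b' _ => B.nonneg i u v b') (mem_univ b)
    _ ≤ ∑ v', ∑ b', B.trans i u v' b' :=
        single_le_sum (f := fun v' => ∑ b', B.trans i u v' b')
          (fun _ _ => sum_nonneg fun _ _ => B.nonneg ..) (mem_univ v)
    _ = 1 := B.sum_one i u

theorem IsSpaceSource.sum_eq_one {s n : ℕ} {X : (Fin n → ZMod 2) → ℝ}
    (hX : IsSpaceSource s n X) : ∑ x, X x = 1 := by
  obtain ⟨B, hB⟩ := hX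
  simp only [hB, B.prob_eq_walkProb]
  exact sum_walkProb B.sum_one B.start n

section Rounding

variable {a : ℕ} {r : ℝ}

noncomputable def roundDown (a : ℕ) (r : ℝ) : ℝ := ⌊r * 2 ^ a⌋₊ / 2 ^ a

theorem roundDown_nonneg : 0 ≤ roundDown a r := by unfold roundDown; positivity

theorem roundDown_le (hr : 0 ≤ r) : roundDown a r ≤ r := by
  rw [roundDown, div_le_iff₀ (by positivity)]
  exact Nat.floor_le (by positivity)

theorem sub_roundDown_le : r - roundDown a r ≤ (2 ^ a)⁻¹ := by
  have := Nat.lt_floor_add_one (r * 2 ^ a)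
  rw [roundDown, sub_le_iff_le_add, inv_eq_one_div, ← add_div, le_div_iff₀ (by positivity)]
  linarith

theorem floor_mul_two_pow_le (hr : r ≤ 1) : ⌊r * 2 ^ a⌋₊ ≤ 2 ^ a :=
  Nat.floor_le_of_le (by simpa using mul_le_of_le_one_left (pow_nonneg zero_le_two a) hr)

end Rounding

open Classical in
/-- The net: walk distributions of tables with entries in `{0, 2⁻ᵃ, …, 1}` (entries at steps
`i ≥ n` are never read). -/
noncomputable def walkNet (σ β : Type*) [Fintype σ] [Fintype β] (n a : ℕ) :
    Finset ((Fin n → β) → ℝ) :=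
  univ.image fun p : (Fin n → σ → σ → β → Fin (2 ^ a + 1)) × σ =>
    walkProb (fun i u v b => if h : i < n then (p.1 ⟨i, h⟩ u v b : ℝ) / 2 ^ a else 0) p.2

section Net

variable {σ β : Type*} [Fintype σ] [Fintype β] {n : ℕ}

theorem card_walkNet_le (n a : ℕ) :
    #(walkNet σ β n a)
      ≤ (2 ^ a + 1) ^ (n * Fintype.card σ * Fintype.card σ * Fintype.card β) * Fintype.card σ := by
  classical
  refine (card_image_le.trans_eq card_univ).trans_eq ?_
  simp only [Fintype.card_prod, Fintype.card_fun, Fintype.card_fin, ← pow_mul]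
  ring_nf

theorem walkProb_roundDown_mem_walkNet (a : ℕ) {T : ℕ → σ → σ → β → ℝ}
    (h1 : ∀ i u v b, T i u v b ≤ 1) (u₀ : σ) :
    walkProb (n := n) (fun i u v b => roundDown a (T i u v b)) u₀ ∈ walkNet σ β n a := by
  classical
  refine mem_image.2 ⟨(fun i u v b => ⟨⌊T i u v b * 2 ^ a⌋₊,
    Nat.lt_succ_of_le (floor_mul_two_pow_le (h1 ..))⟩, u₀), mem_univ _, ?_⟩
  funext x
  exact walkProb_congr (fun i hi => by funext u v b; simp [hi, roundDown]) u₀ x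

end Net

theorem IsSpaceSource.exists_mem_walkNet {s n : ℕ} {X : (Fin n → ZMod 2) → ℝ}
    (hX : IsSpaceSource s n X) (a : ℕ) :
    ∃ Q ∈ walkNet (Fin (2 ^ s)) (ZMod 2) n a, (∀ x, 0 ≤ Q x ∧ Q x ≤ X x) ∧
      ∑ x, |X x - Q x| ≤ 2 ^ n * ((2 ^ s) ^ n * (n * (2 ^ a)⁻¹)) := by
  obtain ⟨B, hB⟩ := hX
  set T' := fun i u v b => roundDown a (B.trans i u v b)
  have h0 : ∀ i u v b, 0 ≤ T' i u v b := fun _ _ _ _ => roundDown_nonneg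
  have hle : ∀ i u v b, T' i u v b ≤ B.trans i u v b := fun _ _ _ _ => roundDown_le (B.nonneg ..)
  refine ⟨walkProb T' B.start, walkProb_roundDown_mem_walkNet a B.trans_le_one _,
    fun x => ⟨walkProb_nonneg h0 _ x, (hB x).trans_ge (walkProb_le_walkProb h0 hle _ x)⟩, ?_⟩
  calc ∑ x, |X x - walkProb T' B.start x|
      ≤ ∑ _x : Fin n → ZMod 2, ((2 ^ s) ^ n * (n * (2 ^ a)⁻¹) : ℝ) := by
        refine sum_le_sum fun x _ => ?_
        rw [hB, B.prob_eq_walkProb, abs_of_nonneg (sub_nonneg.2 (walkProb_le_walkProb h0 hle _ x))]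
        simpa using walkProb_sub_walkProb_le h0 hle B.trans_le_one
          (fun _ _ _ _ => sub_roundDown_le) B.start x
    _ = 2 ^ n * ((2 ^ s) ^ n * (n * (2 ^ a)⁻¹)) := by simp

section Distributions

variable {α β : Type*} [Fintype α] {X : α → ℝ}

theorem le_two_rpow_neg_of_le_minEntropy (hX : ∑ a, X a = 1) {k : ℝ} (hk : k ≤ minEntropy X)
    (a : α) : X a ≤ 2 ^ (-k) := by
  have hbdd : BddAbove (Set.range X) := (Set.finite_range X).bddAbove
  obtain ⟨b, hb⟩ : ∃ b, 0 < X b := by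
    by_contra! h
    linarith [sum_nonpos fun b (_ : b ∈ univ) => h b]
  calc X a ≤ ⨆ a, X a := le_ciSup hbdd a
    _ = 2 ^ Real.logb 2 (⨆ a, X a) := (Real.rpow_logb two_pos (by norm_num)
          (hb.trans_le (le_ciSup hbdd b))).symm
    _ ≤ 2 ^ (-k) := Real.rpow_le_rpow_of_exponent_le one_le_two (by rw [minEntropy] at hk; linarith)

theorem le_logb_card_of_le_minEntropy (hX : ∑ a, X a = 1) {k : ℝ} (hk : k ≤ minEntropy X) :
    k ≤ Real.logb 2 (Fintype.card α) := by
  have hcard : 1 ≤ Fintype.card α * (2 : ℝ) ^ (-k) := calc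
    1 = ∑ a, X a := hX.symm
    _ ≤ ∑ _a : α, (2 : ℝ) ^ (-k) := sum_le_sum fun a _ => le_two_rpow_neg_of_le_minEntropy hX hk a
    _ = Fintype.card α * (2 : ℝ) ^ (-k) := by simp
  rw [Real.rpow_neg zero_le_two, ← div_eq_mul_inv, one_le_div (by positivity)] at hcard
  exact (Real.le_logb_iff_rpow_le one_lt_two (by linarith [Real.rpow_pos_of_pos two_pos k])).2 hcard

theorem sum_sq_le_of_le {Q : α → ℝ} {θ : ℝ} (hX : ∑ a, X a = 1) (hQ : ∀ a, 0 ≤ Q a ∧ Q a ≤ X a)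
    (hXθ : ∀ a, X a ≤ θ) : ∑ a, Q a ^ 2 ≤ θ := calc
  ∑ a, Q a ^ 2 ≤ ∑ a, θ * X a := sum_le_sum fun a _ => by
    rw [sq, mul_comm θ]
    exact mul_le_mul (hQ a).2 ((hQ a).2.trans (hXθ a)) (hQ a).1 ((hQ a).1.trans (hQ a).2)
  _ = θ := by rw [← mul_sum, hX, mul_one]

theorem statDist_le_sum_abs (X Y : α → ℝ) : statDist X Y ≤ ∑ a, |X a - Y a| :=
  ciSup_le fun S => (abs_sum_le_sum_abs _ _).trans
    (sum_le_sum_of_subset_of_nonneg (subset_univ S) fun _ _ _ => abs_nonneg _)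

theorem pushforward_sub_eq_sum [DecidableEq β] (hX : ∑ a, X a = 1) (f : α → β) (b : β) (c : ℝ) :
    pushforward X f b - c = ∑ a, X a * ((if f a = b then 1 else 0) - c) := by
  simp only [pushforward, mul_sub, sum_sub_distrib, ← sum_mul, hX, one_mul, mul_ite, mul_one,
    mul_zero]
  congr! 3

end Distributions

theorem IsSpaceSource.le_of_le_minEntropy {s n k : ℕ} {X : (Fin n → ZMod 2) → ℝ}
    (hX : IsSpaceSource s n X) (hk : (k : ℝ) ≤ minEntropy X) : k ≤ n := by
  have := le_logb_card_of_le_minEntropy hX.sum_eq_one hk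
  simp only [Fintype.card_fun, ZMod.card, Fintype.card_fin, Nat.cast_pow, Nat.cast_ofNat] at this
  rw [Real.logb_pow, Real.logb_self_eq_one one_lt_two, mul_one] at this
  exact_mod_cast this

open MeasureTheory ProbabilityTheory
open scoped NNReal

theorem ProbabilityTheory.HasSubgaussianMGF.mono {Ω : Type*} [MeasurableSpace Ω] {μ : Measure Ω}
    {X : Ω → ℝ} {c c' : ℝ≥0} (h : HasSubgaussianMGF X c μ) (hc : c ≤ c') :
    HasSubgaussianMGF X c' μ :=
  ⟨h.integrable_exp_mul, fun t => (h.mgf_le t).trans (Real.exp_le_exp.2 (by gcongr))⟩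

section Hoeffding
variable {V W : Type*} [Fintype V] [Fintype W] [Nonempty W]

theorem measureReal_pi_uniform_sum_ge_le [MeasurableSpace W] [DiscreteMeasurableSpace W]
    {f : V → W → ℝ} {r : V → ℝ} {θ : ℝ} (hf : ∀ v y, |f v y| ≤ r v)
    (hmean : ∀ v, ∑ y, f v y = 0) (hθ : ∑ v, r v ^ 2 ≤ θ) {t : ℝ} (ht : 0 ≤ t) :
    (Measure.pi fun _ : V => (PMF.uniformOfFintype W).toMeasure).real {g | t ≤ ∑ v, f v (g v)}
      ≤ Real.exp (-t ^ 2 / (2 * θ)) := by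
  set μ := Measure.pi fun _ : V => (PMF.uniformOfFintype W).toMeasure
  have hsub (v : V) :
      HasSubgaussianMGF (fun g : V → W => f v (g v)) ((‖r v - -r v‖₊ / 2) ^ 2) μ := by
    refine hasSubgaussianMGF_of_mem_Icc_of_integral_eq_zero Measurable.of_discrete.aemeasurable
      (ae_of_all _ fun g => abs_le.1 (hf v (g v))) ?_
    have hv := measurePreserving_eval (fun _ : V => (PMF.uniformOfFintype W).toMeasure) v
    rw [← integral_map hv.measurable.aemeasurable Measurable.of_discrete.aestronglyMeasurable,
      hv.map_eq, PMF.integral_eq_sum]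
    simp [← Finset.mul_sum, hmean]
  have hsum := HasSubgaussianMGF.sum_of_iIndepFun
    (iIndepFun_pi fun v => Measurable.of_discrete.aemeasurable) (s := univ) fun v _ => hsub v
  have hc : ∑ v, (‖r v - -r v‖₊ / 2) ^ 2 ≤ θ.toNNReal := by
    rw [← NNReal.coe_le_coe, Real.coe_toNNReal _ ((sum_nonneg fun v _ => sq_nonneg _).trans hθ)]
    push_cast
    convert hθ using 2 with v
    rw [Real.norm_eq_abs, div_pow, sq_abs]
    ring
  refine (hsum.mono hc).measure_ge_le ht |>.trans_eq ?_
  rw [Real.coe_toNNReal _ ((sum_nonneg fun v _ => sq_nonneg _).trans hθ)]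

theorem exists_forall_abs_sum_apply_lt {ι : Type*} (I : Finset ι) {f : ι → V → W → ℝ}
    {r : ι → V → ℝ} {θ t : ℝ} (hf : ∀ i ∈ I, ∀ v y, |f i v y| ≤ r i v)
    (hmean : ∀ i ∈ I, ∀ v, ∑ y, f i v y = 0) (hθ : ∀ i ∈ I, ∑ v, r i v ^ 2 ≤ θ) (ht : 0 ≤ t)
    (hI : 2 * #I * Real.exp (-t ^ 2 / (2 * θ)) < 1) :
    ∃ g : V → W, ∀ i ∈ I, |∑ v, f i v (g v)| < t := by
  let : MeasurableSpace W := ⊤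
  set μ := Measure.pi fun _ : V => (PMF.uniformOfFintype W).toMeasure
  set bad : ι → Set (V → W) := fun i =>
    {g | t ≤ ∑ v, f i v (g v)} ∪ {g | t ≤ ∑ v, -f i v (g v)}
  have hbad : μ.real (⋃ i ∈ I, bad i) < 1 := calc
    μ.real (⋃ i ∈ I, bad i) ≤ ∑ i ∈ I, μ.real (bad i) := measureReal_biUnion_finset_le _ _
    _ ≤ ∑ i ∈ I, 2 * Real.exp (-t ^ 2 / (2 * θ)) := by
      refine sum_le_sum fun i hi => (measureReal_union_le _ _).trans ?_
      rw [two_mul]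
      gcongr
      · exact measureReal_pi_uniform_sum_ge_le (W := W) (hf i hi) (hmean i hi) (hθ i hi) ht
      · refine measureReal_pi_uniform_sum_ge_le (f := fun v y => -f i v y) (fun v y => ?_)
          (fun v => ?_) (hθ i hi) ht
        · rw [abs_neg]; exact hf i hi v y
        · rw [sum_neg_distrib, hmean i hi v, neg_zero]
    _ < 1 := by rwa [sum_const, nsmul_eq_mul, ← mul_assoc, mul_comm (#I : ℝ)]
  obtain ⟨g, hg⟩ : (⋃ i ∈ I, bad i)ᶜ.Nonempty := by
    rw [Set.nonempty_compl]
    intro h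
    rw [h, probReal_univ] at hbad
    exact lt_irrefl _ hbad
  refine ⟨g, fun i hi => abs_lt.2 ⟨?_, ?_⟩⟩
  all_goals
    have : g ∉ bad i := fun h => hg (Set.mem_biUnion hi h)
    simp only [bad, Set.mem_union, Set.mem_ofPred_eq, not_or, not_le, sum_neg_distrib] at this
  · linarith [this.2]
  · exact this.1

theorem exists_statDist_pushforward_le_of_net (Qs : Finset (V → ℝ)) {θ t D : ℝ}
    (hθ : ∀ Q ∈ Qs, ∑ v, Q v ^ 2 ≤ θ) (ht : 0 ≤ t)
    (hQs : 2 * (#Qs * Fintype.card W) * Real.exp (-t ^ 2 / (2 * θ)) < 1) :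
    ∃ Ext : V → W, ∀ X : V → ℝ, ∑ v, X v = 1 → (∃ Q ∈ Qs, ∑ v, |X v - Q v| ≤ D) →
      statDist (pushforward X Ext) (uniformDist W) ≤ Fintype.card W * (t + D) := by
  classical
  set c : ℝ := (Fintype.card W : ℝ)⁻¹
  have hc : ∀ y b : W, |(if y = b then 1 else 0) - c| ≤ 1 := by
    have hc0 : 0 ≤ c := by positivity
    have hc1 : c ≤ 1 := inv_le_one_of_one_le₀ (by exact_mod_cast Fintype.card_pos)
    intro y b
    split_ifs <;> rw [abs_le] <;> constructor <;> linarith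
  obtain ⟨g, hg⟩ := exists_forall_abs_sum_apply_lt (Qs ×ˢ univ)
    (f := fun p v y => p.1 v * ((if y = p.2 then 1 else 0) - c)) (r := fun p v => |p.1 v|)
    (fun p _ v y => by rw [abs_mul]; exact mul_le_of_le_one_right (abs_nonneg _) (hc y p.2))
    (fun p _ v => by simp [← mul_sum, sum_sub_distrib, c])
    (fun p hp => by simpa only [sq_abs] using hθ p.1 (mem_product.1 hp).1) ht
    (by rwa [card_product, card_univ, Nat.cast_mul])
  refine ⟨g, fun X hX ⟨Q, hQ, hXQ⟩ => (statDist_le_sum_abs _ _).trans ?_⟩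
  calc ∑ b, |pushforward X g b - uniformDist W b| ≤ ∑ _b : W, (t + D) := sum_le_sum fun b _ => ?_
    _ = Fintype.card W * (t + D) := by simp [mul_add]
  have hsplit : pushforward X g b - uniformDist W b
      = ∑ v, (X v - Q v) * ((if g v = b then 1 else 0) - c)
        + ∑ v, Q v * ((if g v = b then 1 else 0) - c) := by
    rw [uniformDist, pushforward_sub_eq_sum hX, ← sum_add_distrib]
    exact sum_congr rfl fun v _ => by ring
  rw [hsplit, add_comm t]
  refine (abs_add_le _ _).trans (add_le_add ?_ (hg (Q, b) (mem_product.2 ⟨hQ, mem_univ b⟩)).le)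
  refine (abs_sum_le_sum_abs _ _).trans (le_trans (sum_le_sum fun v _ => ?_) hXQ)
  rw [abs_mul]
  exact mul_le_of_le_one_right (abs_nonneg _) (hc _ _)

end Hoeffding

theorem sqrt_le_and_four_mul_le_of_le {δ C : ℝ} (hδ0 : 0 ≤ δ) (hδ2 : δ ≤ 1 / 2) (hC : 2 ≤ C)
    {n k s : ℕ} (hk : 0 < k) (hs : 0 < s) (hkn : k ≤ n)
    (h : C * (n : ℝ) ^ ((1 : ℝ) / 2 + δ) * (s : ℝ) ^ ((1 : ℝ) / 2 - δ) ≤ k) :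
    C * √n ≤ k ∧ 4 * s ≤ k := by
  set p := (1 : ℝ) / 2 + δ with hp
  set q := (1 : ℝ) / 2 - δ with hq
  have hk0 : (0 : ℝ) < k := by exact_mod_cast hk
  have hn1 : (1 : ℝ) ≤ n := by exact_mod_cast hk.trans_le hkn
  have hs1 : (1 : ℝ) ≤ s := by exact_mod_cast hs
  have hsq : 1 ≤ (s : ℝ) ^ q := Real.one_le_rpow hs1 (by linarith)
  constructor
  · calc C * √n = C * (n : ℝ) ^ ((1 : ℝ) / 2) * 1 := by rw [Real.sqrt_eq_rpow, mul_one]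
      _ ≤ C * (n : ℝ) ^ p * (s : ℝ) ^ q := by
        gcongr
        linarith
      _ ≤ k := h
  -- `k ≤ n` lets the factor `n ^ p` be traded for `k ^ p`, leaving `C * s ^ q ≤ k ^ q`.
  have hCs : C * (s : ℝ) ^ q ≤ (k : ℝ) ^ q := by
    refine le_of_mul_le_mul_left ?_ (Real.rpow_pos_of_pos hk0 p)
    calc (k : ℝ) ^ p * (C * (s : ℝ) ^ q) = C * (k : ℝ) ^ p * (s : ℝ) ^ q := by ring
      _ ≤ C * (n : ℝ) ^ p * (s : ℝ) ^ q := by gcongr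
      _ ≤ k := h
      _ = (k : ℝ) ^ p * (k : ℝ) ^ q := by rw [← Real.rpow_add hk0]; norm_num [p, q]
  have hq0 : 0 < q := by
    by_contra! hq0
    rw [show q = 0 by linarith, Real.rpow_zero, Real.rpow_zero] at hCs
    linarith
  have h4 : (4 : ℝ) ^ q ≤ 2 := calc
    (4 : ℝ) ^ q ≤ 4 ^ ((1 : ℝ) / 2) := Real.rpow_le_rpow_of_exponent_le (by norm_num) (by linarith)
    _ = 2 := by rw [← Real.sqrt_eq_rpow, show (4 : ℝ) = 2 ^ 2 by norm_num, Real.sqrt_sq zero_le_two]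
  suffices ((4 : ℝ) * s) ^ q ≤ (k : ℝ) ^ q by
    exact_mod_cast (Real.rpow_le_rpow_iff (by positivity) hk0.le hq0).1 this
  calc ((4 : ℝ) * s) ^ q = 4 ^ q * (s : ℝ) ^ q := Real.mul_rpow (by norm_num) (by positivity)
    _ ≤ C * (s : ℝ) ^ q := by gcongr; linarith
    _ ≤ (k : ℝ) ^ q := hCs

theorem le_two_rpow_four_mul_sqrt {x : ℝ} (hx : 0 ≤ x) : x ≤ 2 ^ (4 * √x) := by
  have hy : √x ≤ 2 ^ (2 * √x) := calc
    √x ≤ Real.exp √x := by linarith [Real.add_one_le_exp √x]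
    _ ≤ Real.exp (Real.log 2 * (2 * √x)) := by
      gcongr
      nlinarith [Real.log_two_gt_d9, Real.sqrt_nonneg x]
    _ = 2 ^ (2 * √x) := (Real.rpow_def_of_pos two_pos _).symm
  calc x = √x * √x := (Real.mul_self_sqrt hx).symm
    _ ≤ 2 ^ (2 * √x) * 2 ^ (2 * √x) := mul_le_mul hy hy (Real.sqrt_nonneg x) (by positivity)
    _ = 2 ^ (4 * √x) := by rw [← Real.rpow_add two_pos]; ring_nf

theorem two_mul_succ_pow_mul_le (a N s m : ℕ) :
    2 * ((2 ^ a + 1) ^ N * 2 ^ s * 2 ^ m) ≤ 2 ^ (1 + (a + 1) * N + s + m) := by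
  have h : 2 ^ a + 1 ≤ 2 ^ (a + 1) := by
    rw [pow_succ]
    have := Nat.one_le_two_pow (n := a)
    omega
  calc 2 * ((2 ^ a + 1) ^ N * 2 ^ s * 2 ^ m) ≤ 2 * ((2 ^ (a + 1)) ^ N * 2 ^ s * 2 ^ m) := by gcongr
    _ = _ := by rw [← pow_mul, pow_add, pow_add, pow_add, pow_one]; ring

theorem succ_mul_add_le_two_pow_mul_cube {n s m : ℕ} (hn : 0 < n) (hs : s ≤ n) (hm : m ≤ n) :
    1 + ((s + 5) * n + 1) * (n * 2 ^ s * 2 ^ s * 2) + s + m ≤ 2 ^ (2 * s + 5) * n ^ 3 := by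
  have hP : 2 ^ (2 * s + 5) = 32 * (2 ^ s * 2 ^ s) := by rw [pow_add, two_mul, pow_add]; ring
  have hP1 : 1 ≤ 2 ^ s * 2 ^ s := Nat.one_le_iff_ne_zero.2 (by positivity)
  have h7 : (s + 5) * n + 1 ≤ 7 * n ^ 2 := by nlinarith
  have h3 : 1 + s + m ≤ 3 * n ^ 3 * (2 ^ s * 2 ^ s) := calc
    1 + s + m ≤ 3 * n ^ 3 * 1 := by nlinarith [Nat.le_self_pow (by norm_num : 3 ≠ 0) n]
    _ ≤ 3 * n ^ 3 * (2 ^ s * 2 ^ s) := by gcongr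
  rw [hP]
  nlinarith

theorem net_exponent_lt {n k s m : ℕ} (hn : 0 < n) (hk : 64 * √n ≤ k) (hs : 4 * s ≤ k)
    (hkn : k ≤ n) (hm : (m : ℝ) ≤ √n) :
    ((1 + ((s + 5) * n + 1) * (n * 2 ^ s * 2 ^ s * 2) + s + m : ℕ) : ℝ)
      < 2 ^ ((k : ℝ) - 2 * √n - 2 * m - 3) := by
  set y := √n
  have hn1 : (1 : ℝ) ≤ n := by exact_mod_cast hn
  have hy1 : 1 ≤ y := Real.one_le_sqrt.2 hn1
  have hmn : m ≤ n := by exact_mod_cast hm.trans (Real.sqrt_le_self_iff.2 (Or.inr hn1))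
  have hs' : (4 * s : ℝ) ≤ k := by exact_mod_cast hs
  calc ((1 + ((s + 5) * n + 1) * (n * 2 ^ s * 2 ^ s * 2) + s + m : ℕ) : ℝ)
      ≤ (2 ^ (2 * s + 5) : ℕ) * (n : ℝ) ^ 3 := by
        exact_mod_cast succ_mul_add_le_two_pow_mul_cube hn (by omega) hmn
    _ ≤ 2 ^ ((2 * s + 5 : ℕ) : ℝ) * (2 ^ (4 * y)) ^ 3 := by
      rw [Real.rpow_natCast, Nat.cast_pow, Nat.cast_ofNat]
      gcongr
      exact le_two_rpow_four_mul_sqrt (Nat.cast_nonneg n)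
    _ = 2 ^ ((2 * s + 5 : ℕ) + 12 * y) := by
      rw [← Real.rpow_natCast (2 ^ (4 * y)), ← Real.rpow_mul zero_le_two, Real.rpow_add two_pos]
      ring_nf
    _ < 2 ^ ((k : ℝ) - 2 * y - 2 * m - 3) :=
      Real.rpow_lt_rpow_of_exponent_lt one_lt_two (by push_cast; linarith)

theorem net_card_mul_exp_lt_one {n k s m : ℕ} (hn : 0 < n) (hk : 64 * √n ≤ k) (hs : 4 * s ≤ k)
    (hkn : k ≤ n) (hm : (m : ℝ) ≤ √n) :
    2 * ((((2 ^ ((s + 5) * n) + 1) ^ (n * 2 ^ s * 2 ^ s * 2) * 2 ^ s : ℕ) : ℝ) * 2 ^ m)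
      * Real.exp (-((2 : ℝ) ^ (-√n - m - 1)) ^ 2 / (2 * 2 ^ (-(k : ℝ)))) < 1 := by
  set J := 1 + ((s + 5) * n + 1) * (n * 2 ^ s * 2 ^ s * 2) + s + m
  set E := (k : ℝ) - 2 * √n - 2 * m - 3
  have hcount : 2 * ((((2 ^ ((s + 5) * n) + 1) ^ (n * 2 ^ s * 2 ^ s * 2) * 2 ^ s : ℕ) : ℝ) * 2 ^ m)
      ≤ 2 ^ J := by exact_mod_cast two_mul_succ_pow_mul_le _ _ s m
  have hexp : ((2 : ℝ) ^ (-√n - m - 1)) ^ 2 / (2 * 2 ^ (-(k : ℝ))) = 2 ^ E := by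
    have h2k : (2 : ℝ) * 2 ^ (-(k : ℝ)) = 2 ^ (1 - (k : ℝ)) := by
      rw [Real.rpow_sub two_pos, Real.rpow_one, Real.rpow_neg zero_le_two, div_eq_mul_inv]
    rw [h2k, ← Real.rpow_natCast _ 2, ← Real.rpow_mul zero_le_two, ← Real.rpow_sub two_pos]
    congr 1
    push_cast
    ring
  have hJ := net_exponent_lt hn hk hs hkn hm
  rw [neg_div, hexp]
  calc _ ≤ 2 ^ J * Real.exp (-2 ^ E) := mul_le_mul_of_nonneg_right hcount (Real.exp_pos _).le
    _ ≤ Real.exp J * Real.exp (-2 ^ E) := by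
      gcongr
      rw [← Real.exp_one_pow]
      gcongr
      linarith [Real.add_one_le_exp 1]
    _ = Real.exp (J - 2 ^ E) := by rw [← Real.exp_add, sub_eq_add_neg]
    _ < 1 := Real.exp_lt_one_iff.2 (by linarith)

theorem two_pow_mul_error_le {n s m : ℕ} (hn : 0 < n) (hm : (m : ℝ) ≤ √n) :
    (2 : ℝ) ^ m * (2 ^ (-√n - m - 1) + 2 ^ n * ((2 ^ s) ^ n * (n * (2 ^ ((s + 5) * n))⁻¹)))
      ≤ 2 ^ (-√n) := by
  set y := √n
  have hn1 : (1 : ℝ) ≤ n := by exact_mod_cast hn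
  have hyn : y ≤ n := Real.sqrt_le_self_iff.2 (Or.inr hn1)
  have hmn : m ≤ n := by exact_mod_cast hm.trans hyn
  have hhalf : (2 : ℝ) ^ (-y - 1) = 2 ^ (-y) / 2 := by
    rw [Real.rpow_sub two_pos, Real.rpow_one]
  have h1 : (2 : ℝ) ^ m * 2 ^ (-y - m - 1) = 2 ^ (-y) / 2 := by
    rw [← Real.rpow_natCast, ← Real.rpow_add two_pos, ← hhalf]
    ring_nf
  have h2 : (2 : ℝ) ^ m * (2 ^ n * ((2 ^ s) ^ n * (n * (2 ^ ((s + 5) * n))⁻¹))) ≤ 2 ^ (-y) / 2 :=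
    calc (2 : ℝ) ^ m * (2 ^ n * ((2 ^ s) ^ n * (n * (2 ^ ((s + 5) * n))⁻¹)))
        ≤ 2 ^ n * (2 ^ n * ((2 ^ s) ^ n * (2 ^ n * (2 ^ ((s + 5) * n))⁻¹))) := by
          gcongr
          · exact one_le_two
          · exact_mod_cast (Nat.lt_two_pow_self).le
      _ = 2 ^ (-(2 * n : ℝ)) := by
        rw [Real.rpow_neg zero_le_two, show (2 * n : ℝ) = ((2 * n : ℕ) : ℝ) by push_cast; ring,
          Real.rpow_natCast, ← pow_mul, show (s + 5) * n = s * n + n + n + n + 2 * n by ring,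
          pow_add, pow_add, pow_add, pow_add]
        field_simp
      _ ≤ 2 ^ (-y - 1) := Real.rpow_le_rpow_of_exponent_le one_le_two (by linarith)
      _ = 2 ^ (-y) / 2 := hhalf
  rw [mul_add]
  linarith

theorem exists_extractor_of_sqrt_le {n k s : ℕ} (hn : 0 < n) (hk : 64 * √n ≤ k) (hs : 4 * s ≤ k)
    (hkn : k ≤ n) :
    ∃ Ext : (Fin n → ZMod 2) → (Fin ⌊√n⌋₊ → ZMod 2), ∀ X, IsSpaceSource s n X →
      (k : ℝ) ≤ minEntropy X → statDist (pushforward X Ext) (uniformDist _) ≤ 2 ^ (-√n) := by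
  set m := ⌊√n⌋₊
  -- The precision `a` makes the rounding error `2ⁿ (2ˢ)ⁿ n 2⁻ᵃ` negligible, and the balance
  -- `t = 2 ^ (-√n - m - 1)` spends half of the error `2 ^ (-√n)` after summing over `2ᵐ` outputs.
  have hm : (m : ℝ) ≤ √n := Nat.floor_le (Real.sqrt_nonneg _)
  set a := (s + 5) * n
  set θ : ℝ := 2 ^ (-(k : ℝ))
  set Qs := (walkNet (Fin (2 ^ s)) (ZMod 2) n a).filter fun Q => ∑ x, Q x ^ 2 ≤ θ
  have hQs : (#Qs : ℝ) ≤ (((2 ^ a + 1) ^ (n * 2 ^ s * 2 ^ s * 2) * 2 ^ s : ℕ) : ℝ) := by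
    exact_mod_cast (card_filter_le _ _).trans ((card_walkNet_le n a).trans_eq (by simp))
  have hunion : 2 * (#Qs * Fintype.card (Fin m → ZMod 2) : ℝ)
      * Real.exp (-((2 : ℝ) ^ (-√n - m - 1)) ^ 2 / (2 * θ)) < 1 := by
    refine lt_of_le_of_lt ?_ (net_card_mul_exp_lt_one hn hk hs hkn hm)
    simp only [Fintype.card_fun, ZMod.card, Fintype.card_fin]
    push_cast
    gcongr
    exact_mod_cast hQs
  obtain ⟨Ext, hExt⟩ := exists_statDist_pushforward_le_of_net Qs
    (D := 2 ^ n * ((2 ^ s) ^ n * (n * (2 ^ a)⁻¹))) (fun Q hQ => (mem_filter.1 hQ).2)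
    (by positivity) hunion
  refine ⟨Ext, fun X hX hXk => (hExt X hX.sum_eq_one ?_).trans ?_⟩
  · obtain ⟨Q, hQ, hQX, hXQ⟩ := hX.exists_mem_walkNet a
    exact ⟨Q, mem_filter.2 ⟨hQ, sum_sq_le_of_le hX.sum_eq_one hQX
      (le_two_rpow_neg_of_le_minEntropy hX.sum_eq_one hXk)⟩, hXQ⟩
  · simpa using two_pow_mul_error_le (s := s) hn hm

/-- For any fixed `δ ∈ (0, 1/2]` there exist constants `C, c > 0` such that
for all positive integers `n, k, s` with `k ≥ C·n^{1/2+δ}·s^{1/2−δ}`, there is an extractor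
`Ext : {0,1}ⁿ → {0,1}^m` with `m = ⌊n^c⌋` such that for every space-`s` source `X` over
`{0,1}ⁿ` with min-entropy at least `k`, `|Ext(X) − U_m| ≤ 2^{−n^c}`. -/
theorem smallSpaceExtractor_lowError :
    ∀ δ : ℝ, 0 < δ → δ ≤ 1 / 2 →
      ∃ C : ℝ, 0 < C ∧ ∃ c : ℝ, 0 < c ∧
        ∀ n k s : ℕ, 0 < n → 0 < k → 0 < s →
          C * (n : ℝ) ^ ((1 : ℝ) / 2 + δ) * (s : ℝ) ^ ((1 : ℝ) / 2 - δ) ≤ (k : ℝ) →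
          ∃ Ext : (Fin n → ZMod 2) → (Fin (⌊(n : ℝ) ^ c⌋₊) → ZMod 2),
            ∀ X : (Fin n → ZMod 2) → ℝ,
              IsSpaceSource s n X → (k : ℝ) ≤ minEntropy X →
              statDist (pushforward X Ext) (uniformDist _) ≤ (2 : ℝ) ^ (-((n : ℝ) ^ c)) := by
  intro δ hδ0 hδ2
  refine ⟨64, by norm_num, 1 / 2, by norm_num, fun n k s hn hk hs hineq => ?_⟩
  rw [← Real.sqrt_eq_rpow]
  by_cases hkn : k ≤ n
  · obtain ⟨hk64, hks⟩ := sqrt_le_and_four_mul_le_of_le hδ0.le hδ2 (by norm_num) hk hs hkn hineq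
    exact exists_extractor_of_sqrt_le hn hk64 hks hkn
  · exact ⟨fun _ _ => 0, fun X hX hXk => absurd (hX.le_of_le_minEntropy hXk) hkn⟩
end

section
/- There exists a universal constant C ≥ 1 such that for all positive integers n ≥ r ≥ s with r even, there exists an (n,r,s)-design G with independence number α(G) ≤ C·r⁴·n^{2(r−s)/r}. -/
/-- An `(n,r,s)`-design: an `r`-uniform hypergraph on vertex set `Fin n` (given by its
finite set of hyperedges) in which any two distinct hyperedges intersect in fewer than
`s` vertices. -/
def IsDesign (n r s : ℕ) (E : Finset (Finset (Fin n))) : Prop :=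
  (∀ e ∈ E, e.card = r) ∧
  ∀ e₁ ∈ E, ∀ e₂ ∈ E, e₁ ≠ e₂ → (e₁ ∩ e₂).card < s

/-- The independence number of a hypergraph: the size of the largest set of vertices
containing no hyperedge. -/
noncomputable def indepNum (n : ℕ) (E : Finset (Finset (Fin n))) : ℕ :=
  sSup {m | ∃ S : Finset (Fin n), (∀ e ∈ E, ¬ e ⊆ S) ∧ S.card = m}

/-!
Take `K` uniformly random `r`-sets `ω 0, …, ω (K - 1)` and keep `ω i` when it meets every
earlier `ω j`, kept or not, in fewer than `s` points: the kept sets form an `(n,r,s)`-design.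
Fix an `M`-set `S` and call a set heavy when it meets `S` in at least `s` points; only heavy
earlier sets can block an `r`-subset of `S`. While fewer than `H` of the earlier sets are heavy,
the next one is a kept edge inside `S` with probability at least
`(C(M,r) - H C(r,s) C(M-s,r-s)) / C(n,r)`, and having `H` heavy sets among the `K` is a binomial
tail event. For `M = ⌈2²⁰ r⁴ n^(2(r-s)/r)⌉` both failure probabilities are below `2⁻ⁿ / 2`, so a
union bound over the at most `2ⁿ` sets `S` yields a sample in which every `M`-set contains an
edge, that is `α < M`. Probabilities appear as counts of sequences in `piFinset`. The cases
`s = r` (all `r`-sets) and `M > n` (no edges) are immediate.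
-/

open Finset Fintype

section Counting

variable {α : Type*} [DecidableEq α]

theorem card_filter_powersetCard_superset_le (r : ℕ) (T W : Finset α) :
    #{x ∈ powersetCard r W | T ⊆ x} ≤ (#W - #T).choose (r - #T) := by
  by_cases hTW : T ⊆ W
  · rw [← card_sdiff_of_subset hTW, ← card_powersetCard]
    refine card_le_card_of_injOn (· \ T) (fun x hx => ?_) (fun x hx y hy hxy => ?_)
    · simp only [coe_filter, mem_powersetCard, Set.mem_ofPred_eq] at hx
      rw [mem_coe, mem_powersetCard, card_sdiff_of_subset hx.2, hx.1.2]
      exact ⟨sdiff_subset_sdiff hx.1.1 le_rfl, rfl⟩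
    · simp only [coe_filter, Set.mem_ofPred_eq] at hx hy
      rw [← sdiff_union_of_subset hx.2, ← sdiff_union_of_subset hy.2]
      exact congrArg (· ∪ T) hxy
  · rw [card_eq_zero.2 (filter_eq_empty_iff.2 fun x hx hTx =>
      hTW (hTx.trans (mem_powersetCard.1 hx).1))]
    exact Nat.zero_le _

theorem card_filter_le_card_inter_le (r s : ℕ) (W f : Finset α) :
    #{x ∈ powersetCard r W | s ≤ #(x ∩ f)} ≤ (#f).choose s * (#W - s).choose (r - s) := by
  calc #{x ∈ powersetCard r W | s ≤ #(x ∩ f)}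
      ≤ #((powersetCard s f).biUnion fun T => {x ∈ powersetCard r W | T ⊆ x}) := by
        refine card_le_card fun x hx => ?_
        obtain ⟨hxW, hxf⟩ := mem_filter.1 hx
        obtain ⟨T, hT, hTcard⟩ := exists_subset_card_eq hxf
        exact mem_biUnion.2 ⟨T, mem_powersetCard.2 ⟨hT.trans inter_subset_right, hTcard⟩,
          mem_filter.2 ⟨hxW, hT.trans inter_subset_left⟩⟩
    _ ≤ ∑ T ∈ powersetCard s f, #{x ∈ powersetCard r W | T ⊆ x} := card_biUnion_le
    _ ≤ #(powersetCard s f) * (#W - s).choose (r - s) := by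
        refine sum_le_card_nsmul _ _ _ fun T hT => ?_
        rw [← (mem_powersetCard.1 hT).2]
        exact card_filter_powersetCard_superset_le r T W
    _ = (#f).choose s * (#W - s).choose (r - s) := by rw [card_powersetCard]

end Counting

section Sequences

variable {β : Type*} [DecidableEq β]

theorem card_filter_piFinset_forall_mem_take_le (R : Finset β)
    (C : (k : ℕ) → (Fin k → β) → Finset β) {b : ℕ}
    (hC : ∀ k (p : Fin k → β), (∀ j, p j ∈ R) → #(C k p) ≤ b) (K : ℕ) :
    #{ω ∈ piFinset fun _ : Fin K => R | ∀ i : Fin K, ω i ∈ C i (Fin.take i i.isLt.le ω)}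
      ≤ b ^ K := by
  induction K with
  | zero => exact (card_filter_le _ _).trans (by simp)
  | succ K ih =>
    rw [pow_succ']
    refine (card_le_mul_card_image_of_maps_to (f := Fin.init) (fun ω hω => ?_) b
      (fun p hp => ?_)).trans (Nat.mul_le_mul_left b ih)
    · simp only [mem_filter, mem_piFinset] at hω ⊢
      exact ⟨fun i => hω.1 _, fun i => hω.2 i.castSucc⟩
    · simp only [mem_filter, mem_piFinset] at hp
      refine (card_le_card_of_injOn (fun ω => ω (Fin.last K)) (fun ω hω => ?_)
        (fun ω hω ω' hω' h => ?_)).trans (hC K p hp.1)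
      · rw [mem_coe, mem_filter, mem_filter] at hω
        rw [mem_coe, ← hω.2]
        exact hω.1.2 (Fin.last K)
      · rw [mem_coe, mem_filter] at hω hω'
        rw [← Fin.snoc_init_self ω, ← Fin.snoc_init_self ω', hω.2, hω'.2]
        exact congrArg _ h

theorem card_filter_piFinset_le_card_filter_le (R : Finset β) (P : β → Prop) [DecidablePred P]
    (K H : ℕ) :
    #{ω ∈ piFinset fun _ : Fin K => R | H ≤ #{i | P (ω i)}}
      ≤ K.choose H * (#{x ∈ R | P x} ^ H * #R ^ (K - H)) := by
  calc _ ≤ #((powersetCard H univ).biUnion fun T =>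
          piFinset fun i : Fin K => if i ∈ T then {x ∈ R | P x} else R) := by
        refine card_le_card fun ω hω => ?_
        obtain ⟨hωR, hωP⟩ := mem_filter.1 hω
        obtain ⟨T, hT, hTcard⟩ := exists_subset_card_eq hωP
        refine mem_biUnion.2 ⟨T, mem_powersetCard.2 ⟨subset_univ T, hTcard⟩, ?_⟩
        simp only [mem_piFinset] at hωR ⊢
        intro i
        split_ifs with hi
        · exact mem_filter.2 ⟨hωR i, (mem_filter.1 (hT hi)).2⟩
        · exact hωR i
    _ ≤ ∑ T ∈ powersetCard H univ, #(piFinset fun i : Fin K =>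
          if i ∈ T then {x ∈ R | P x} else R) := card_biUnion_le
    _ = ∑ _T ∈ powersetCard H (univ : Finset (Fin K)), #{x ∈ R | P x} ^ H * #R ^ (K - H) := by
        refine sum_congr rfl fun T hT => ?_
        rw [card_piFinset]
        simp only [apply_ite card, prod_ite, prod_const, filter_mem_eq_inter, univ_inter,
          filter_not, card_sdiff_of_subset (subset_univ T), card_univ, Fintype.card_fin,
          (mem_powersetCard.1 hT).2]
    _ = _ := by rw [sum_const, card_powersetCard, card_univ, Fintype.card_fin, smul_eq_mul]

end Sequences

section Designs

variable {α : Type*} [DecidableEq α]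

def greedyDesign (s : ℕ) {K : ℕ} (ω : Fin K → Finset α) : Finset (Finset α) :=
  image ω {i | ∀ j < i, #(ω i ∩ ω j) < s}

theorem isDesign_greedyDesign {n r s K : ℕ} (ω : Fin K → Finset (Fin n))
    (hω : ∀ i, #(ω i) = r) : IsDesign n r s (greedyDesign s ω) := by
  refine ⟨?_, ?_⟩
  · simp only [greedyDesign, mem_image]
    rintro _ ⟨i, -, rfl⟩
    exact hω i
  · simp only [greedyDesign, mem_image, mem_filter, mem_univ, true_and]
    rintro _ ⟨i, hi, rfl⟩ _ ⟨j, hj, rfl⟩ hne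
    rcases lt_trichotomy i j with h | rfl | h
    · exact inter_comm (ω i) (ω j) ▸ hj i h
    · exact absurd rfl hne
    · exact hi j h

theorem indepNum_le_of_forall_card_eq {n M : ℕ} {E : Finset (Finset (Fin n))}
    (h : ∀ S : Finset (Fin n), #S = M → ∃ e ∈ E, e ⊆ S) : indepNum n E ≤ M - 1 := by
  refine csSup_le' ?_
  rintro _ ⟨S, hS, rfl⟩
  by_contra! hlt
  obtain ⟨T, hTS, hT⟩ := exists_subset_card_eq (show M ≤ #S by omega)
  obtain ⟨e, he, heT⟩ := h T hT
  exact hS e he (heT.trans hTS)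

theorem indepNum_le_card (n : ℕ) (E : Finset (Finset (Fin n))) : indepNum n E ≤ n := by
  refine csSup_le' ?_
  rintro _ ⟨S, -, rfl⟩
  simpa using card_le_univ S

theorem isDesign_powersetCard (n r : ℕ) : IsDesign n r r (powersetCard r univ) := by
  refine ⟨fun e he => (mem_powersetCard.1 he).2, fun e₁ he₁ e₂ he₂ hne => ?_⟩
  rw [mem_powersetCard] at he₁ he₂
  by_contra! h
  have h₁ := eq_of_subset_of_card_le (inter_subset_left (s₁ := e₁) (s₂ := e₂)) (by omega)
  have h₂ := eq_of_subset_of_card_le (inter_subset_right (s₁ := e₁) (s₂ := e₂)) (by omega)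
  exact hne (h₁.symm.trans h₂)

theorem indepNum_powersetCard_le (n r : ℕ) : indepNum n (powersetCard r univ) ≤ r - 1 :=
  indepNum_le_of_forall_card_eq fun S hS => ⟨S, mem_powersetCard.2 ⟨subset_univ S, hS⟩, subset_rfl⟩

end Designs

section Sampling

variable {α : Type*} [Fintype α] [DecidableEq α]

theorem card_filter_not_subset_and_forall_inter_lt_le (S : Finset α) {r s k : ℕ}
    (p : Fin k → Finset α) (hp : ∀ j, #(p j) = r) :
    #{x ∈ powersetCard r univ | ¬(x ⊆ S ∧ ∀ j, #(x ∩ p j) < s)}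
      ≤ (card α).choose r + #{j | s ≤ #(p j ∩ S)} * (r.choose s * (#S - s).choose (r - s))
        - (#S).choose r := by
  have hsplit := card_filter_add_card_filter_not (s := powersetCard r (univ : Finset α))
    (fun x => x ⊆ S ∧ ∀ j, #(x ∩ p j) < s)
  have hgood : {x ∈ powersetCard r (univ : Finset α) | x ⊆ S ∧ ∀ j, #(x ∩ p j) < s}
      = {x ∈ powersetCard r S | ∀ j, #(x ∩ p j) < s} := by
    ext x
    simp only [mem_filter, mem_powersetCard, subset_univ, true_and]
    tauto
  have hsplitS := card_filter_add_card_filter_not (s := powersetCard r S)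
    (fun x => ∀ j, #(x ∩ p j) < s)
  have hbad : #{x ∈ powersetCard r S | ¬ ∀ j, #(x ∩ p j) < s}
      ≤ #{j | s ≤ #(p j ∩ S)} * (r.choose s * (#S - s).choose (r - s)) := by
    calc _ ≤ #(({j | s ≤ #(p j ∩ S)} : Finset (Fin k)).biUnion
            fun j => {x ∈ powersetCard r S | s ≤ #(x ∩ p j)}) := by
          refine card_le_card fun x hx => ?_
          simp only [mem_filter, not_forall, not_lt, mem_powersetCard] at hx
          obtain ⟨⟨hxS, hxr⟩, j, hj⟩ := hx
          refine mem_biUnion.2 ⟨j, mem_filter.2 ⟨mem_univ j, hj.trans (card_le_card ?_)⟩,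
            mem_filter.2 ⟨mem_powersetCard.2 ⟨hxS, hxr⟩, hj⟩⟩
          exact fun a ha => mem_inter.2 ⟨(mem_inter.1 ha).2, hxS (mem_inter.1 ha).1⟩
      _ ≤ _ := card_biUnion_le_card_mul _ _ _ fun j _ =>
          hp j ▸ card_filter_le_card_inter_le r s S (p j)
  rw [card_powersetCard] at hsplitS
  rw [card_powersetCard, card_univ, hgood] at hsplit
  omega

-- Empty once the prefix `p` has `H` sets meeting `S` in `s` points: sequences with that many
-- such sets are left to the tail bound.
def badContinuations (r s H : ℕ) (S : Finset α) {k : ℕ} (p : Fin k → Finset α) :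
    Finset (Finset α) :=
  if #{j | s ≤ #(p j ∩ S)} < H then
    {x ∈ powersetCard r (univ : Finset α) | ¬(x ⊆ S ∧ ∀ j, #(x ∩ p j) < s)}
  else ∅

theorem card_badContinuations_le {r s M : ℕ} (H : ℕ) {S : Finset α} (hS : #S = M) {k : ℕ}
    (p : Fin k → Finset α) (hp : ∀ j, p j ∈ powersetCard r univ) :
    #(badContinuations r s H S p)
      ≤ (card α).choose r + H * (r.choose s * (M - s).choose (r - s)) - M.choose r := by
  unfold badContinuations
  split_ifs with hH
  · refine (card_filter_not_subset_and_forall_inter_lt_le S p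
      fun j => (mem_powersetCard.1 (hp j)).2).trans ?_
    rw [hS]
    exact Nat.sub_le_sub_right (Nat.add_le_add_left (Nat.mul_le_mul_right _ hH.le) _) _
  · exact Finset.card_empty.le.trans (Nat.zero_le _)

theorem filter_forall_not_subset_and_inter_lt_subset {r s : ℕ} (S : Finset α) (K H : ℕ) :
    {ω ∈ piFinset fun _ : Fin K => powersetCard r (univ : Finset α) |
        ∀ i, ¬(ω i ⊆ S ∧ ∀ j < i, #(ω i ∩ ω j) < s)}
      ⊆ {ω ∈ piFinset fun _ : Fin K => powersetCard r (univ : Finset α) |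
          ∀ i : Fin K, ω i ∈ badContinuations r s H S (Fin.take i i.isLt.le ω)}
        ∪ {ω ∈ piFinset fun _ : Fin K => powersetCard r (univ : Finset α) |
          H ≤ #{i | s ≤ #(ω i ∩ S)}} := by
  intro ω hω
  obtain ⟨hωR, hω⟩ := mem_filter.1 hω
  rw [mem_union, mem_filter, mem_filter]
  refine (le_or_gt H #{i | s ≤ #(ω i ∩ S)}).symm.imp (fun hlt => ⟨hωR, fun i => ?_⟩)
    (fun hle => ⟨hωR, hle⟩)
  have hprefix : #{j : Fin i | s ≤ #(Fin.take i i.isLt.le ω j ∩ S)} < H :=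
    lt_of_le_of_lt (card_le_card_of_injOn (Fin.castLE i.isLt.le)
      (fun j hj => mem_filter.2 ⟨mem_univ _, (mem_filter.1 hj).2⟩)
      (Fin.castLE_injective _).injOn) hlt
  rw [badContinuations, if_pos hprefix, mem_filter]
  refine ⟨mem_piFinset.1 hωR i, fun ⟨hsub, hclean⟩ => hω i ⟨hsub, fun j hj => ?_⟩⟩
  exact hclean ⟨j, hj⟩

theorem card_filter_piFinset_forall_not_subset_and_inter_lt_le {r s M : ℕ} (S : Finset α)
    (hS : #S = M) (K H : ℕ) :
    #{ω ∈ piFinset fun _ : Fin K => powersetCard r (univ : Finset α) |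
        ∀ i, ¬(ω i ⊆ S ∧ ∀ j < i, #(ω i ∩ ω j) < s)}
      ≤ ((card α).choose r + H * (r.choose s * (M - s).choose (r - s)) - M.choose r) ^ K
        + K.choose H * ((M.choose s * (card α - s).choose (r - s)) ^ H
          * (card α).choose r ^ (K - H)) := by
  have hheavy : #{x ∈ powersetCard r univ | s ≤ #(x ∩ S)}
      ≤ M.choose s * (card α - s).choose (r - s) := by
    have := card_filter_le_card_inter_le r s (univ : Finset α) S
    rwa [card_univ, hS] at this
  refine (card_le_card (filter_forall_not_subset_and_inter_lt_subset S K H)).trans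
    ((card_union_le _ _).trans (add_le_add
      (card_filter_piFinset_forall_mem_take_le _ (fun _ => badContinuations r s H S)
        (fun _ p hp => card_badContinuations_le H hS p hp) K)
      ((card_filter_piFinset_le_card_filter_le _ (fun x => s ≤ #(x ∩ S)) K H).trans ?_)))
  rw [card_powersetCard, card_univ]
  gcongr

theorem exists_forall_exists_mem_greedyDesign_subset {r s M K H : ℕ}
    (h : (card α).choose M *
        (((card α).choose r + H * (r.choose s * (M - s).choose (r - s)) - M.choose r) ^ K
          + K.choose H * ((M.choose s * (card α - s).choose (r - s)) ^ H
            * (card α).choose r ^ (K - H)))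
      < (card α).choose r ^ K) :
    ∃ ω : Fin K → Finset α, (∀ i, #(ω i) = r) ∧
      ∀ S : Finset α, #S = M → ∃ e ∈ greedyDesign s ω, e ⊆ S := by
  set Ω := piFinset fun _ : Fin K => powersetCard r (univ : Finset α)
  have hbad : #((powersetCard M univ).biUnion fun S =>
      {ω ∈ Ω | ∀ i, ¬(ω i ⊆ S ∧ ∀ j < i, #(ω i ∩ ω j) < s)}) < #Ω := by
    rw [card_piFinset_const, card_powersetCard, card_univ]
    refine lt_of_le_of_lt (card_biUnion_le_card_mul _ _ _ fun S hS => ?_) (by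
      rwa [card_powersetCard, card_univ])
    exact card_filter_piFinset_forall_not_subset_and_inter_lt_le S (mem_powersetCard.1 hS).2 K H
  obtain ⟨ω, hωΩ, hω⟩ := exists_mem_notMem_of_card_lt_card hbad
  refine ⟨ω, fun i => (mem_powersetCard.1 (mem_piFinset.1 hωΩ i)).2, fun S hS => ?_⟩
  have hgood : ¬ ∀ i, ¬(ω i ⊆ S ∧ ∀ j < i, #(ω i ∩ ω j) < s) := fun hfail =>
    hω (mem_biUnion.2 ⟨S, mem_powersetCard.2 ⟨subset_univ S, hS⟩, mem_filter.2 ⟨hωΩ, hfail⟩⟩)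
  obtain ⟨i, hiS, hi⟩ := not_forall_not.1 hgood
  exact ⟨ω i, mem_image_of_mem ω (mem_filter.2 ⟨mem_univ i, hi⟩), hiS⟩

end Sampling

section Estimates

theorem div_two_mul_pow_le_choose {M k : ℕ} (hk : 2 * k ≤ M) :
    ((M : ℝ) / (2 * k)) ^ k ≤ M.choose k := by
  calc ((M : ℝ) / (2 * k)) ^ k = ((M : ℝ) / 2) ^ k / (k : ℝ) ^ k := by
        rw [div_pow, div_pow, mul_pow, div_div]
    _ ≤ ((M : ℝ) / 2) ^ k / k.factorial :=
        div_le_div_of_nonneg_left (by positivity) (by positivity)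
          (by exact_mod_cast k.factorial_le_pow)
    _ ≤ ((M + 1 - k : ℕ) : ℝ) ^ k / k.factorial := by
        gcongr
        rw [Nat.cast_sub (by omega)]
        push_cast
        have : 2 * (k : ℝ) ≤ M := by exact_mod_cast hk
        linarith
    _ ≤ M.choose k := Nat.pow_le_choose k M

theorem pow_le_pow_of_pow_eq_pow {x y : ℝ} {r a b c : ℕ} (hx : 1 ≤ x) (hy : 0 ≤ y) (hr : r ≠ 0)
    (h : y ^ r = x ^ a) (hbc : b * r ≤ a * c) : x ^ b ≤ y ^ c := by
  refine (pow_le_pow_iff_left₀ (by positivity) (by positivity) hr).1 ?_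
  calc (x ^ b) ^ r = x ^ (b * r) := (pow_mul x b r).symm
    _ ≤ x ^ (a * c) := pow_le_pow_right₀ hx hbc
    _ = (y ^ c) ^ r := by rw [pow_mul, ← h, ← pow_mul, ← pow_mul, mul_comm]

section

variable {n r s M : ℕ} {y : ℝ}

theorem mul_choose_sq_mul_choose_le_choose (hsr : s < r) (hn : 1 ≤ n) (hy0 : 0 ≤ y)
    (hy : y ^ r = (n : ℝ) ^ (2 * (r - s))) (hM : 2 ^ 20 * (r : ℝ) ^ 4 * y ≤ M) :
    72 * (n + 1) * (r.choose s ^ 2 * (n - s).choose (r - s)) ≤ M.choose r := by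
  have hnR : (1 : ℝ) ≤ n := by exact_mod_cast hn
  have hy1 : 1 ≤ y := by
    simpa using pow_le_pow_of_pow_eq_pow (b := 0) (c := 1) hnR hy0 (by omega) hy (by omega)
  have hr : (1 : ℝ) ≤ r := by exact_mod_cast (by omega : 1 ≤ r)
  have hrr : (r : ℝ) ≤ r ^ 4 := le_self_pow₀ hr (by norm_num)
  have hnat : 72 * (n + 1) * (r.choose s ^ 2 * (n - s).choose (r - s))
      ≤ 2 ^ (19 * r) * n ^ (2 * (r - s)) :=
    calc _ ≤ (2 ^ 8 * n) * ((2 ^ r) ^ 2 * n ^ (r - s)) :=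
          Nat.mul_le_mul (by omega) (Nat.mul_le_mul
            (Nat.pow_le_pow_left (Nat.choose_le_two_pow r s) 2)
            ((Nat.choose_le_pow _ _).trans (Nat.pow_le_pow_left (Nat.sub_le n s) _)))
      _ = 2 ^ (2 * r + 8) * n ^ (r - s + 1) := by ring
      _ ≤ 2 ^ (19 * r) * n ^ (2 * (r - s)) :=
          Nat.mul_le_mul (Nat.pow_le_pow_right (by norm_num) (by omega))
            (Nat.pow_le_pow_right hn (by omega))
  have hreal : (2 : ℝ) ^ (19 * r) * (n : ℝ) ^ (2 * (r - s)) ≤ M.choose r :=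
    calc _ = (2 ^ 19 * y) ^ r := by rw [mul_pow, hy, ← pow_mul]
      _ ≤ ((M : ℝ) / (2 * r)) ^ r := by
          gcongr
          rw [le_div_iff₀ (by positivity)]
          nlinarith
      _ ≤ M.choose r := div_two_mul_pow_le_choose (by
          have : 2 * (r : ℝ) ≤ M := by nlinarith
          exact_mod_cast this)
  have hnatR : ((72 * (n + 1) * (r.choose s ^ 2 * (n - s).choose (r - s)) : ℕ) : ℝ)
      ≤ (2 : ℝ) ^ (19 * r) * (n : ℝ) ^ (2 * (r - s)) := by exact_mod_cast hnat
  exact_mod_cast hnatR.trans hreal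

theorem mul_choose_sq_le_choose (hsr : s < r) (hrs : r < 2 * s) (hn : 1 ≤ n) (hy0 : 0 ≤ y)
    (hy : y ^ r = (n : ℝ) ^ (2 * (r - s))) (hM : 2 ^ 20 * (r : ℝ) ^ 4 * y ≤ M) :
    12 * (n + 1) * r.choose s ^ 2 ≤ M.choose s := by
  have hnR : (1 : ℝ) ≤ n := by exact_mod_cast hn
  have hexp : 1 * r ≤ 2 * (r - s) * s := by
    obtain ⟨t, rfl⟩ := Nat.exists_eq_add_of_lt hsr
    rw [Nat.add_assoc, Nat.add_sub_cancel_left]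
    nlinarith
  have hys : (n : ℝ) ≤ y ^ s := by
    simpa using pow_le_pow_of_pow_eq_pow (b := 1) (c := s) hnR hy0 (by omega) hy hexp
  have hy1 : 1 ≤ y := by
    simpa using pow_le_pow_of_pow_eq_pow (b := 0) (c := 1) hnR hy0 (by omega) hy (by omega)
  have hsR : (s : ℝ) ≤ r := by exact_mod_cast hsr.le
  have hs : (1 : ℝ) ≤ s := by exact_mod_cast (by omega : 1 ≤ s)
  have hrr : (r : ℝ) ≤ r ^ 4 := le_self_pow₀ (hs.trans hsR) (by norm_num)
  have hnat : 12 * (n + 1) * r.choose s ^ 2 ≤ 2 ^ (19 * s) * n :=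
    calc _ ≤ (2 ^ 5 * n) * (2 ^ r) ^ 2 :=
          Nat.mul_le_mul (by omega) (Nat.pow_le_pow_left (Nat.choose_le_two_pow r s) 2)
      _ = 2 ^ (2 * r + 5) * n := by ring
      _ ≤ 2 ^ (19 * s) * n := Nat.mul_le_mul_right _ (Nat.pow_le_pow_right (by norm_num) (by omega))
  have hreal : (2 : ℝ) ^ (19 * s) * n ≤ M.choose s :=
    calc _ ≤ (2 : ℝ) ^ (19 * s) * y ^ s := by gcongr
      _ = (2 ^ 19 * y) ^ s := by rw [mul_pow, ← pow_mul]
      _ ≤ ((M : ℝ) / (2 * s)) ^ s := by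
          gcongr
          rw [le_div_iff₀ (by positivity)]
          nlinarith
      _ ≤ M.choose s := div_two_mul_pow_le_choose (by
          have : 2 * (s : ℝ) ≤ M := by nlinarith
          exact_mod_cast this)
  have hnatR : ((12 * (n + 1) * r.choose s ^ 2 : ℕ) : ℝ) ≤ (2 : ℝ) ^ (19 * s) * n := by
    exact_mod_cast hnat
  exact_mod_cast hnatR.trans hreal

end

open Real

theorem sub_half_pow_le {N Cm : ℝ} {K n : ℕ} (hN : 0 < N) (hCmN : Cm ≤ 2 * N)
    (hK : 2 * (n + 1) * N ≤ K * Cm) : (N - Cm / 2) ^ K ≤ N ^ K / 2 ^ (n + 1) := by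
  have hstep : N - Cm / 2 ≤ N * exp (-(Cm / (2 * N))) :=
    calc N - Cm / 2 = N * (1 - Cm / (2 * N)) := by field_simp
      _ ≤ N * exp (-(Cm / (2 * N))) := by gcongr; exact one_sub_le_exp_neg _
  have hexp : (n + 1 : ℝ) ≤ K * (Cm / (2 * N)) := by
    rw [← mul_div_assoc, le_div_iff₀ (by positivity)]
    linarith
  have htwo : (2 : ℝ) ^ (n + 1) ≤ exp (n + 1) := by
    calc (2 : ℝ) ^ (n + 1) ≤ exp 1 ^ (n + 1) := by gcongr; exact exp_one_gt_two.le
      _ = exp (n + 1) := by rw [← exp_nat_mul]; push_cast; ring_nf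
  calc (N - Cm / 2) ^ K ≤ (N * exp (-(Cm / (2 * N)))) ^ K :=
        pow_le_pow_left₀ (by linarith) hstep K
    _ = N ^ K * exp (-(K * (Cm / (2 * N)))) := by
        rw [mul_pow, ← exp_nat_mul, mul_neg]
    _ ≤ N ^ K * exp (-(n + 1)) := by gcongr
    _ ≤ N ^ K / 2 ^ (n + 1) := by
        rw [exp_neg, ← div_eq_mul_inv]
        gcongr

theorem choose_mul_pow_mul_pow_le {K H : ℕ} {B N : ℝ} (hB : 0 ≤ B) (hN : 0 ≤ N) (hH : 0 < H)
    (hKB : 6 * K * B ≤ H * N) : K.choose H * (B ^ H * N ^ (K - H)) ≤ N ^ K / 2 ^ H := by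
  rcases lt_or_ge K H with hKH | hHK
  · rw [Nat.choose_eq_zero_of_lt hKH, Nat.cast_zero, zero_mul]
    positivity
  have hHR : (0 : ℝ) < H := by exact_mod_cast hH
  have hfac : (H : ℝ) ^ H ≤ H.factorial * exp 1 ^ H := by
    have := pow_div_factorial_le_exp _ hHR.le H
    rwa [div_le_iff₀ (by positivity), ← exp_one_pow, mul_comm] at this
  have hchoose : (K.choose H : ℝ) * H ^ H ≤ (exp 1 * K) ^ H :=
    calc (K.choose H : ℝ) * H ^ H ≤ (K ^ H / H.factorial) * (H.factorial * exp 1 ^ H) :=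
          mul_le_mul (Nat.choose_le_pow_div H K) hfac (by positivity) (by positivity)
      _ = (exp 1 * K) ^ H := by
          field_simp
          ring
  have hbase : exp 1 * K * B ≤ H * (N / 2) := by
    have : exp 1 * K * B ≤ 3 * K * B := by gcongr; exact exp_one_lt_three.le
    linarith
  refine le_of_mul_le_mul_right ?_ (pow_pos hHR H)
  calc (K.choose H : ℝ) * (B ^ H * N ^ (K - H)) * H ^ H
      = ((K.choose H : ℝ) * H ^ H) * B ^ H * N ^ (K - H) := by ring
    _ ≤ (exp 1 * K) ^ H * B ^ H * N ^ (K - H) := by gcongr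
    _ = (exp 1 * K * B) ^ H * N ^ (K - H) := by rw [mul_pow (exp 1 * K)]
    _ ≤ (H * (N / 2)) ^ H * N ^ (K - H) := by gcongr
    _ = N ^ K / 2 ^ H * H ^ H := by
        rw [mul_pow, div_pow, ← Nat.add_sub_cancel' hHK, pow_add, Nat.add_sub_cancel_left]
        ring

theorem two_pow_mul_add_lt {n N Cm Q B K H : ℕ} (hN : 0 < N) (hCmN : Cm ≤ N)
    (hK : 2 * (n + 1) * N ≤ K * Cm) (hHQ : 2 * (H * Q) ≤ Cm) (hKB : 6 * K * B ≤ H * N)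
    (hH : n + 2 ≤ H) :
    2 ^ n * ((N + H * Q - Cm) ^ K + K.choose H * (B ^ H * N ^ (K - H))) < N ^ K := by
  have hNR : (0 : ℝ) < N := by exact_mod_cast hN
  have hfirst : ((N + H * Q - Cm : ℕ) : ℝ) ^ K ≤ (N : ℝ) ^ K / 2 ^ (n + 1) := by
    have hCm2N : (Cm : ℝ) ≤ 2 * N := by exact_mod_cast (by omega : Cm ≤ 2 * N)
    have hKR : 2 * ((n : ℝ) + 1) * N ≤ K * Cm := by exact_mod_cast hK
    refine le_trans ?_ (sub_half_pow_le hNR hCm2N hKR)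
    have : (2 * (H * Q) : ℝ) ≤ Cm := by exact_mod_cast hHQ
    gcongr
    rw [Nat.cast_sub (by omega)]
    push_cast
    linarith
  have hsecond : (K.choose H : ℝ) * ((B : ℝ) ^ H * (N : ℝ) ^ (K - H)) ≤ (N : ℝ) ^ K / 2 ^ (n + 2) :=
    (choose_mul_pow_mul_pow_le (by positivity) (by positivity) (by omega)
      (by exact_mod_cast hKB)).trans (by gcongr; norm_num)
  have hreal : (2 : ℝ) ^ n * (((N + H * Q - Cm : ℕ) : ℝ) ^ K
      + (K.choose H : ℝ) * ((B : ℝ) ^ H * (N : ℝ) ^ (K - H))) < (N : ℝ) ^ K :=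
    calc _ ≤ (2 : ℝ) ^ n * ((N : ℝ) ^ K / 2 ^ (n + 1) + (N : ℝ) ^ K / 2 ^ (n + 2)) := by
          gcongr
      _ = 3 / 4 * (N : ℝ) ^ K := by
          rw [pow_succ, pow_succ, pow_succ]
          field_simp
          ring
      _ < (N : ℝ) ^ K := by
          have : (0 : ℝ) < (N : ℝ) ^ K := by positivity
          linarith
  exact_mod_cast hreal

theorem two_mul_mul_le_of_mul_le_add {n N Cm Q B K H : ℕ} (hCm : 0 < Cm) (hCmN : Cm ≤ N)
    (hBQ : 72 * (n + 1) * (B * Q) ≤ Cm ^ 2) (hQ : 12 * (n + 1) * Q ≤ Cm)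
    (hK : K * Cm ≤ 2 * (n + 1) * N + Cm) (hH : H * N ≤ 6 * K * B + (n + 3) * N) :
    2 * (H * Q) ≤ Cm := by
  have hCm3 : Cm * (72 * (B * Q)) ≤ N * Cm ^ 2 :=
    calc Cm * (72 * (B * Q)) ≤ Cm * Cm ^ 2 := by gcongr; nlinarith
      _ ≤ N * Cm ^ 2 := by gcongr
  have hN : 0 < N := hCm.trans_le hCmN
  refine Nat.le_of_mul_le_mul_left ?_ (by positivity : 0 < 6 * N * Cm)
  calc 6 * N * Cm * (2 * (H * Q)) = 12 * Cm * Q * (H * N) := by ring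
    _ ≤ 12 * Cm * Q * (6 * K * B + (n + 3) * N) := by gcongr
    _ = 72 * (K * Cm) * (B * Q) + 12 * (n + 3) * Q * (N * Cm) := by ring
    _ ≤ 72 * (2 * (n + 1) * N + Cm) * (B * Q) + 3 * 12 * (n + 1) * Q * (N * Cm) := by
        gcongr 72 * ?_ * _ + ?_ * _ * _
        omega
    _ = 2 * N * (72 * (n + 1) * (B * Q)) + Cm * (72 * (B * Q))
        + 3 * (12 * (n + 1) * Q) * (N * Cm) := by ring
    _ ≤ 2 * N * Cm ^ 2 + N * Cm ^ 2 + 3 * Cm * (N * Cm) :=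
        add_le_add (add_le_add (by gcongr) hCm3) (by gcongr)
    _ = 6 * N * Cm * Cm := by ring

theorem exists_two_pow_mul_add_lt {n N Cm Q B : ℕ} (hCm : 0 < Cm) (hCmN : Cm ≤ N)
    (hBQ : 72 * (n + 1) * (B * Q) ≤ Cm ^ 2) (hQ : 12 * (n + 1) * Q ≤ Cm) :
    ∃ K H : ℕ, 2 ^ n * ((N + H * Q - Cm) ^ K + K.choose H * (B ^ H * N ^ (K - H))) < N ^ K := by
  have hN : 0 < N := hCm.trans_le hCmN
  -- Essentially the least `K` with `hK`, and the least `H` with `hKB` and `n + 2 ≤ H`.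
  set K := 2 * (n + 1) * N / Cm + 1
  set H := 6 * K * B / N + n + 3
  have hK : 2 * (n + 1) * N ≤ K * Cm := by
    have := Nat.lt_div_mul_add (a := 2 * (n + 1) * N) hCm
    simp only [K, Nat.add_mul, one_mul]
    omega
  have hKB : 6 * K * B ≤ H * N := by
    have := Nat.lt_div_mul_add (a := 6 * K * B) hN
    simp only [H, Nat.add_mul]
    nlinarith
  have hK' : K * Cm ≤ 2 * (n + 1) * N + Cm := by
    have := Nat.div_mul_le_self (2 * (n + 1) * N) Cm
    simp only [K, Nat.add_mul, one_mul]
    omega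
  have hH' : H * N ≤ 6 * K * B + (n + 3) * N := by
    have := Nat.div_mul_le_self (6 * K * B) N
    simp only [H, Nat.add_mul]
    nlinarith
  have hHQ := two_mul_mul_le_of_mul_le_add hCm hCmN hBQ hQ hK' hH'
  have hH : n + 2 ≤ H := by
    simp only [H]
    linarith [Nat.zero_le (6 * K * B / N)]
  exact ⟨K, H, two_pow_mul_add_lt hN hCmN hK hHQ hKB hH⟩

end Estimates

theorem exists_design_indepNum_le_sub_one {n r s M : ℕ} {y : ℝ} (hsr : s < r) (hrn : r ≤ n)
    (hy0 : 0 ≤ y) (hy : y ^ r = (n : ℝ) ^ (2 * (r - s))) (hM : 2 ^ 20 * (r : ℝ) ^ 4 * y ≤ M)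
    (hMn : M ≤ n) : ∃ E, IsDesign n r s E ∧ indepNum n E ≤ M - 1 := by
  have hn : 1 ≤ n := by omega
  have hrs : r < 2 * s := by
    by_contra! h
    have hnR : (1 : ℝ) ≤ n := by exact_mod_cast hn
    have hyn : (n : ℝ) ≤ y := by
      simpa using pow_le_pow_of_pow_eq_pow (b := 1) (c := 1) hnR hy0 (by omega) hy (by omega)
    have hr : (1 : ℝ) ≤ (r : ℝ) ^ 4 := one_le_pow₀ (by exact_mod_cast (by omega : 1 ≤ r))
    have : (M : ℝ) ≤ n := by exact_mod_cast hMn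
    nlinarith
  have hA := mul_choose_sq_mul_choose_le_choose hsr hn hy0 hy hM
  have hB := mul_choose_sq_le_choose hsr hrs hn hy0 hy hM
  have hrs_pos : 0 < r.choose s := Nat.choose_pos hsr.le
  have hCm : 0 < M.choose r :=
    lt_of_lt_of_le (by have := Nat.choose_pos (Nat.sub_le_sub_right hrn s); positivity) hA
  have hpascal := Nat.choose_mul (n := M) hsr.le
  have hBQ : 72 * (n + 1) * (M.choose s * (n - s).choose (r - s)
      * (r.choose s * (M - s).choose (r - s))) ≤ M.choose r ^ 2 :=
    calc _ = 72 * (n + 1) * ((n - s).choose (r - s) * r.choose s)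
          * (M.choose s * (M - s).choose (r - s)) := by ring
      _ = 72 * (n + 1) * (r.choose s ^ 2 * (n - s).choose (r - s)) * M.choose r := by
          rw [← hpascal]; ring
      _ ≤ M.choose r ^ 2 := (Nat.mul_le_mul_right _ hA).trans_eq (sq _).symm
  have hQ : 12 * (n + 1) * (r.choose s * (M - s).choose (r - s)) ≤ M.choose r := by
    refine Nat.le_of_mul_le_mul_right ?_ hrs_pos
    calc _ = 12 * (n + 1) * r.choose s ^ 2 * (M - s).choose (r - s) := by ring
      _ ≤ M.choose s * (M - s).choose (r - s) := Nat.mul_le_mul_right _ hB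
      _ = M.choose r * r.choose s := hpascal.symm
  obtain ⟨K, H, hKH⟩ := exists_two_pow_mul_add_lt hCm (Nat.choose_le_choose r hMn) hBQ hQ
  obtain ⟨ω, hωr, hω⟩ := exists_forall_exists_mem_greedyDesign_subset (α := Fin n) (s := s)
    (M := M) (K := K) (H := H) (by
      rw [Fintype.card_fin]
      exact (Nat.mul_le_mul_right _ (Nat.choose_le_two_pow n M)).trans_lt hKH)
  exact ⟨greedyDesign s ω, isDesign_greedyDesign ω hωr, indepNum_le_of_forall_card_eq hω⟩

theorem exists_design_indepNum_le (n r s : ℕ) (hsr : s ≤ r) (hrn : r ≤ n) :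
    ∃ E : Finset (Finset (Fin n)), IsDesign n r s E ∧
      (indepNum n E : ℝ) ≤ 2 ^ 20 * (r : ℝ) ^ 4 * (n : ℝ) ^ (2 * ((r : ℝ) - s) / r) := by
  set y := (n : ℝ) ^ (2 * ((r : ℝ) - s) / r)
  have hy0 : 0 ≤ y := by positivity
  rcases hsr.eq_or_lt with rfl | hsr
  · refine ⟨powersetCard s univ, isDesign_powersetCard n s, ?_⟩
    have hind := (indepNum_powersetCard_le n s).trans (Nat.sub_le s 1)
    have hs : (s : ℝ) ≤ (s : ℝ) ^ 4 := by exact_mod_cast Nat.le_self_pow (by norm_num) s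
    simp only [y, sub_self, mul_zero, zero_div, Real.rpow_zero, mul_one]
    calc (indepNum n (powersetCard s univ) : ℝ) ≤ s := by exact_mod_cast hind
      _ ≤ 2 ^ 20 * (s : ℝ) ^ 4 := by linarith
  have hy : y ^ r = (n : ℝ) ^ (2 * (r - s)) := by
    have hr : (r : ℝ) ≠ 0 := Nat.cast_ne_zero.2 (by omega)
    rw [← Real.rpow_natCast, ← Real.rpow_mul (Nat.cast_nonneg n), ← Real.rpow_natCast]
    congr 1
    push_cast [Nat.cast_sub hsr.le]
    field_simp
  by_cases hMn : ⌈2 ^ 20 * (r : ℝ) ^ 4 * y⌉₊ ≤ n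
  · obtain ⟨E, hE, hind⟩ := exists_design_indepNum_le_sub_one hsr hrn hy0 hy (Nat.le_ceil _) hMn
    refine ⟨E, hE, ?_⟩
    have hceil := Nat.ceil_lt_add_one (by positivity : 0 ≤ 2 ^ 20 * (r : ℝ) ^ 4 * y)
    rcases Nat.eq_zero_or_pos ⌈2 ^ 20 * (r : ℝ) ^ 4 * y⌉₊ with h0 | hpos
    · rw [h0, Nat.zero_sub, Nat.le_zero] at hind
      rw [hind, Nat.cast_zero]
      positivity
    · have := (Nat.cast_le (α := ℝ)).2 hind
      rw [Nat.cast_sub hpos, Nat.cast_one] at this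
      linarith
  · refine ⟨∅, ⟨by simp, by simp⟩, ?_⟩
    exact (Nat.cast_le.2 (indepNum_le_card n ∅)).trans (Nat.lt_ceil.1 (not_le.1 hMn)).le

/-- There is a universal constant `C ≥ 1` such that for all positive
integers `n ≥ r ≥ s` with `r` even, there exists an `(n,r,s)`-design `G` with
independence number `α(G) ≤ C·r⁴·n^{2(r−s)/r}`. -/
theorem explicit_designs_even :
    ∃ C : ℝ, 1 ≤ C ∧
      ∀ n r s : ℕ, 1 ≤ s → s ≤ r → r ≤ n → Even r →
        ∃ E : Finset (Finset (Fin n)), IsDesign n r s E ∧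
          (indepNum n E : ℝ) ≤ C * (r : ℝ) ^ 4 * (n : ℝ) ^ (2 * ((r : ℝ) - s) / r) :=
  ⟨2 ^ 20, by norm_num, fun n r s _ hsr hrn _ => exists_design_indepNum_le n r s hsr hrn⟩
end

section
/- Let n ≥ r ≥ s ≥ 1 be integers and let Q ⊆ 𝔽₂^n be a linear [n,k,d]-code with d > 2(r−s). Let Δ_r = {x ∈ 𝔽₂^n : Δ(x) = r} be the set of vectors of Hamming weight r. Then the hypergraph G_{Q ∩ Δ_r} is an (n,r,s)-design whose independence number α = α(G_{Q ∩ Δ_r}) satisfies α − Λ_r(α) ≤ n − k. -/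
/-- The Hamming weight `Δ(x) = #{i : x_i = 1}` of a vector `x ∈ 𝔽₂ⁿ`. -/
def wt {n : ℕ} (x : Fin n → ZMod 2) : ℕ :=
  (Finset.univ.filter (fun i => x i = 1)).card

/-- The Hamming distance `Δ(x,y) = Δ(x − y)`. -/
def hdist {n : ℕ} (x y : Fin n → ZMod 2) : ℕ := wt (x - y)

/-- The support `supp(x) = {i : x_i = 1}` of a vector `x ∈ 𝔽₂ⁿ`. -/
def supp {n : ℕ} (x : Fin n → ZMod 2) : Finset (Fin n) :=
  Finset.univ.filter (fun i => x i = 1)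

/-- The hypergraph `G_T` associated to `T ⊆ 𝔽₂ⁿ`: vertex set `[n]`, hyperedges
`{supp(x) : x ∈ T}`. -/
def hypergraphOf {n : ℕ} (T : Finset (Fin n → ZMod 2)) : Finset (Finset (Fin n)) :=
  T.image supp

/-- `Λ_r(m)`: the largest dimension of a linear subspace of `𝔽₂^m` containing no vector
of Hamming weight `r`. -/
noncomputable def Lambda (r m : ℕ) : ℕ :=
  sSup {d | ∃ W : Submodule (ZMod 2) (Fin m → ZMod 2),
    (∀ x ∈ W, wt x ≠ r) ∧ Module.finrank (ZMod 2) W = d}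

/-- The set of codewords of `Q` of Hamming weight exactly `r`, as a finite set. -/
noncomputable def weightSlice (n r : ℕ) (Q : Submodule (ZMod 2) (Fin n → ZMod 2)) :
    Finset (Fin n → ZMod 2) :=
  (Set.toFinite {x | x ∈ Q ∧ wt x = r}).toFinset

lemma wt_eq_card_supp {n : ℕ} (x : Fin n → ZMod 2) : wt x = (supp x).card := rfl

lemma supp_sub {n : ℕ} (x y : Fin n → ZMod 2) :
    supp (x - y) = symmDiff (supp x) (supp y) := by
  ext i
  simp only [supp, Finset.mem_filter, Finset.mem_univ, true_and, Finset.mem_symmDiff,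
    Pi.sub_apply]
  generalize x i = a; generalize y i = b
  revert a b; decide

lemma card_symmDiff_aux {n : ℕ} (s t : Finset (Fin n)) :
    (symmDiff s t).card + 2 * (s ∩ t).card = s.card + t.card := by
  have h1 := Finset.card_sdiff_add_card_inter s t
  have h2 := Finset.card_sdiff_add_card_inter t s
  rw [Finset.inter_comm t s] at h2
  have h3 : (symmDiff s t).card = (s \ t).card + (t \ s).card := by
    rw [symmDiff_def, Finset.sup_eq_union]
    exact Finset.card_union_of_disjoint disjoint_sdiff_sdiff
  omega

/-- Let `n ≥ r ≥ s ≥ 1` and let `Q ⊆ 𝔽₂ⁿ` be a linear `[n,k,d]`-code with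
`d > 2(r−s)`. Then `G_{Q ∩ Δ_r}` is an `(n,r,s)`-design whose independence number
`α` satisfies `α − Λ_r(α) ≤ n − k`. -/
theorem design_from_code (n r s k : ℕ) (h1 : 1 ≤ s) (h2 : s ≤ r) (h3 : r ≤ n)
    (Q : Submodule (ZMod 2) (Fin n → ZMod 2))
    (hdim : Module.finrank (ZMod 2) Q = k)
    (hdist : ∀ x ∈ Q, ∀ y ∈ Q, x ≠ y → 2 * (r - s) < hdist x y) :
    IsDesign n r s (hypergraphOf (weightSlice n r Q)) ∧
      (indepNum n (hypergraphOf (weightSlice n r Q)) : ℤ) -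
          (Lambda r (indepNum n (hypergraphOf (weightSlice n r Q))) : ℤ) ≤
        (n : ℤ) - (k : ℤ) := by
  classical
  set E := hypergraphOf (weightSlice n r Q) with hE
  have hslice : ∀ x, x ∈ weightSlice n r Q ↔ x ∈ Q ∧ wt x = r := by
    intro x; simp [weightSlice, Set.Finite.mem_toFinset]
  have hEmem : ∀ e ∈ E, ∃ x, x ∈ Q ∧ wt x = r ∧ supp x = e := by
    intro e he
    rw [hE, hypergraphOf, Finset.mem_image] at he
    obtain ⟨x, hx, rfl⟩ := he
    exact ⟨x, ((hslice x).1 hx).1, ((hslice x).1 hx).2, rfl⟩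
  have hdesign : IsDesign n r s E := by
    constructor
    · intro e he
      obtain ⟨x, _, hw, rfl⟩ := hEmem e he
      exact hw
    · intro e₁ he₁ e₂ he₂ hne
      obtain ⟨x, hxQ, hxw, rfl⟩ := hEmem e₁ he₁
      obtain ⟨y, hyQ, hyw, rfl⟩ := hEmem e₂ he₂
      have hxy : x ≠ y := fun h => hne (by rw [h])
      have hd := hdist x hxQ y hyQ hxy
      have key : _root_.hdist x y + 2 * (supp x ∩ supp y).card = wt x + wt y := by
        rw [_root_.hdist, wt_eq_card_supp x, wt_eq_card_supp y, wt_eq_card_supp,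
          supp_sub, card_symmDiff_aux]
      omega
  refine ⟨hdesign, ?_⟩
  set α := indepNum n E with hα
  have hMbdd : BddAbove {m | ∃ S : Finset (Fin n), (∀ e ∈ E, ¬ e ⊆ S) ∧ S.card = m} := by
    refine ⟨n, ?_⟩
    rintro m ⟨S, -, rfl⟩
    simpa using Finset.card_le_univ S
  have hM : α ∈ {m | ∃ S : Finset (Fin n), (∀ e ∈ E, ¬ e ⊆ S) ∧ S.card = m} := by
    apply Nat.sSup_mem
    · refine ⟨0, ∅, fun e he hsub => ?_, rfl⟩
      have := hdesign.1 e he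
      have : e = ∅ := Finset.subset_empty.mp hsub
      simp [this] at *
      omega
    · exact hMbdd
  obtain ⟨S, hSindep, hScard⟩ := hM
  have hαn : α ≤ n := by
    rw [← hScard]; simpa using Finset.card_le_univ S
  -- linear algebra setup
  let emb : Fin α ↪o Fin n := S.orderEmbOfFin hScard
  let p : (Fin n → ZMod 2) →ₗ[ZMod 2] ((↥(Sᶜ : Finset (Fin n))) → ZMod 2) :=
    LinearMap.funLeft (ZMod 2) (ZMod 2) (fun i => (i : Fin n))
  let ψ := p.domRestrict Q
  let K := LinearMap.ker ψ
  have hKmem : ∀ x : Q, x ∈ K ↔ ∀ i ∉ S, (x : Fin n → ZMod 2) i = 0 := by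
    intro x
    constructor
    · intro hx i hi
      have := congrFun (LinearMap.mem_ker.mp hx) ⟨i, Finset.mem_compl.mpr hi⟩
      simpa [ψ, p, LinearMap.funLeft] using this
    · intro h
      apply LinearMap.mem_ker.mpr
      funext i
      exact h i (Finset.mem_compl.mp i.2)
  let ρ : (Fin n → ZMod 2) →ₗ[ZMod 2] (Fin α → ZMod 2) :=
    LinearMap.funLeft (ZMod 2) (ZMod 2) (fun j => emb j)
  let f : K →ₗ[ZMod 2] (Fin α → ZMod 2) := ρ ∘ₗ (Q.subtype ∘ₗ K.subtype)
  have hrange : ∀ i ∈ S, ∃ j : Fin α, emb j = i := by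
    intro i hi
    have : (i : Fin n) ∈ Set.range (S.orderEmbOfFin hScard) := by
      rw [Finset.range_orderEmbOfFin]; exact hi
    obtain ⟨j, hj⟩ := this
    exact ⟨j, hj⟩
  have hfinj : Function.Injective f := by
    rw [← LinearMap.ker_eq_bot]
    apply (Submodule.eq_bot_iff _).mpr
    rintro ⟨x, hxK⟩ hx0
    have hx0' : ∀ j : Fin α, (x : Fin n → ZMod 2) (emb j) = 0 := by
      intro j
      have := congrFun (LinearMap.mem_ker.mp hx0) j
      simpa [f, ρ, LinearMap.funLeft] using this
    have : x = 0 := by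
      apply Subtype.ext
      funext i
      by_cases hi : i ∈ S
      · obtain ⟨j, rfl⟩ := hrange i hi
        exact hx0' j
      · exact (hKmem x).mp hxK i hi
    simpa using this
  have hsuppS : ∀ x : K, supp (((x : Q)) : Fin n → ZMod 2) ⊆ S := by
    intro x i hi
    by_contra hiS
    have h0 := (hKmem (x : Q)).mp x.2 i hiS
    simp only [supp, Finset.mem_filter, Finset.mem_univ, true_and] at hi
    rw [h0] at hi
    exact one_ne_zero hi.symm
  have hwt : ∀ x : K, wt (f x) = wt (((x : Q)) : Fin n → ZMod 2) := by
    intro x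
    have himg : (Finset.univ.filter (fun j => f x j = 1)).image (fun j => emb j)
        = supp (((x : Q)) : Fin n → ZMod 2) := by
      ext i
      simp only [Finset.mem_image, Finset.mem_filter, Finset.mem_univ, true_and, supp]
      constructor
      · rintro ⟨j, hj, rfl⟩; exact hj
      · intro hi
        have hiS : i ∈ S := hsuppS x (by simp [supp, hi])
        obtain ⟨j, rfl⟩ := hrange i hiS
        exact ⟨j, hi, rfl⟩
    have hinj : Function.Injective (fun j : Fin α => emb j) := fun a b h => emb.injective h
    calc wt (f x) = (Finset.univ.filter (fun j => f x j = 1)).card := rfl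
      _ = ((Finset.univ.filter (fun j => f x j = 1)).image (fun j => emb j)).card :=
          (Finset.card_image_of_injective _ hinj).symm
      _ = (supp (((x : Q)) : Fin n → ZMod 2)).card := by rw [himg]
      _ = wt (((x : Q)) : Fin n → ZMod 2) := (wt_eq_card_supp _).symm
  have hnoweight : ∀ v ∈ LinearMap.range f, wt v ≠ r := by
    rintro v ⟨x, rfl⟩ hr
    have hvw := hwt x
    have hxQ : (((x : Q)) : Fin n → ZMod 2) ∈ Q := (x : Q).2
    have hxE : supp (((x : Q)) : Fin n → ZMod 2) ∈ E := by
      rw [hE, hypergraphOf, Finset.mem_image]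
      exact ⟨_, (hslice _).mpr ⟨hxQ, by omega⟩, rfl⟩
    exact hSindep _ hxE (hsuppS x)
  have hLam : Module.finrank (ZMod 2) (LinearMap.range f) ≤ Lambda r α := by
    apply le_csSup
    · refine ⟨α, ?_⟩
      rintro d ⟨W, -, rfl⟩
      have hle := Submodule.finrank_le W
      simpa [Module.finrank_fintype_fun_eq_card] using hle
    · exact ⟨LinearMap.range f, hnoweight, rfl⟩
  have hrn := LinearMap.finrank_range_add_finrank_ker ψ
  rw [hdim] at hrn
  have hrange_le : Module.finrank (ZMod 2) (LinearMap.range ψ) ≤ n - α := by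
    have hle := Submodule.finrank_le (LinearMap.range ψ)
    have hcard : Module.finrank (ZMod 2) ((↥(Sᶜ : Finset (Fin n))) → ZMod 2) = n - α := by
      rw [Module.finrank_fintype_fun_eq_card, Fintype.card_coe, Finset.card_compl,
        Fintype.card_fin, hScard]
    omega
  have hKrank : Module.finrank (ZMod 2) K = Module.finrank (ZMod 2) (LinearMap.range f) :=
    (LinearMap.finrank_range_of_inj hfinj).symm
  have hKK : Module.finrank (ZMod 2) K
      = Module.finrank (ZMod 2) (LinearMap.ker ψ) := rfl
  omega
end

section
/- Let X = (X₁, …, X_r) be an (r, ℓ, Γ)-total entropy source, and let N, K, n, k be positive integers with N·n = r·ℓ and n a multiple of ℓ. Regroup X into N consecutive blocks of n/ℓ of the sources X_i each, so that X is viewed as a tuple (Y₁, …, Y_N) of N mutually independent distributions over {0,1}^n. If K·n + N·k ≤ Γ, then (Y₁, …, Y_N) is an (N,K,n,k)-adversarial source, i.e., at least K of the blocks Y_j satisfy H∞(Y_j) ≥ k. -/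
open Finset

section Prelim

variable {α β : Type*}

/-- A probability mass function on a finite type, represented as a real-valued function. -/
def IsDist [Fintype α] (X : α → ℝ) : Prop :=
  (∀ a, 0 ≤ X a) ∧ ∑ a, X a = 1

end Prelim

/-- The index of position `t` of block `j`, when `[N·q]` is divided into `N` consecutive
blocks of length `q`. -/
def blockIdx (N q : ℕ) (j : Fin N) (t : Fin q) : Fin (N * q) :=
  ⟨j.val * q + t.val, by
    have ht := t.isLt
    have hj : (j.val + 1) * q ≤ N * q := Nat.mul_le_mul_right q j.isLt
    calc j.val * q + t.val < j.val * q + q := by omega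
      _ = (j.val + 1) * q := by ring
      _ ≤ N * q := hj⟩

section Aux

variable {α : Type*} [Fintype α] [Nonempty α]

lemma aux_le_ciSup (X : α → ℝ) (a : α) : X a ≤ ⨆ b, X b :=
  le_ciSup (Set.Finite.bddAbove (Set.finite_range X)) a

lemma aux_ciSup_pos (X : α → ℝ) (h : IsDist X) : 0 < ⨆ b, X b := by
  by_contra hc
  push_neg at hc
  have hzero : ∀ a, X a = 0 := fun a =>
    le_antisymm (le_trans (aux_le_ciSup X a) hc) (h.1 a)
  have := h.2
  simp [hzero] at this

lemma aux_inv_card_le_ciSup (X : α → ℝ) (h : IsDist X) :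
    ((Fintype.card α : ℝ))⁻¹ ≤ ⨆ b, X b := by
  have hcard : (0 : ℝ) < (Fintype.card α : ℝ) := by
    exact_mod_cast Fintype.card_pos
  rw [inv_le_iff_one_le_mul₀ hcard]
  have : (1 : ℝ) = ∑ a, X a := h.2.symm
  rw [this]
  calc ∑ a, X a ≤ ∑ _a : α, ⨆ b, X b :=
        Finset.sum_le_sum fun a _ => aux_le_ciSup X a
    _ = (⨆ b, X b) * (Fintype.card α : ℝ) := by
        simp [Finset.sum_const, Finset.card_univ, nsmul_eq_mul, mul_comm]

lemma aux_minEntropy_le_logb_card (X : α → ℝ) (h : IsDist X) :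
    minEntropy X ≤ Real.logb 2 (Fintype.card α) := by
  have hM := aux_inv_card_le_ciSup X h
  have hMpos := aux_ciSup_pos X h
  have hcard : (0 : ℝ) < (Fintype.card α : ℝ) := by exact_mod_cast Fintype.card_pos
  have h1 : Real.logb 2 ((Fintype.card α : ℝ))⁻¹ ≤ Real.logb 2 (⨆ b, X b) :=
    Real.logb_le_logb_of_le one_lt_two (by positivity) hM
  rw [Real.logb_inv] at h1
  unfold minEntropy
  linarith

/-- Min-entropy of a product distribution is the sum of min-entropies. -/
lemma aux_minEntropy_prod {ι : Type*} [Fintype ι] [DecidableEq ι] {β : Type*}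
    [Fintype β] [Nonempty β] (f : ι → β → ℝ) (hf : ∀ i, IsDist (f i)) :
    minEntropy (fun y : ι → β => ∏ i, f i (y i)) = ∑ i, minEntropy (f i) := by
  have hMpos : ∀ i, 0 < ⨆ b, f i b := fun i => aux_ciSup_pos (f i) (hf i)
  have hsup : (⨆ y : ι → β, ∏ i, f i (y i)) = ∏ i, ⨆ b, f i b := by
    apply le_antisymm
    · apply ciSup_le
      intro y
      apply Finset.prod_le_prod
      · intro i _; exact (hf i).1 (y i)
      · intro i _; exact aux_le_ciSup (f i) (y i)
    · choose b hb using fun i => exists_eq_ciSup_of_finite (f := f i)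
      calc ∏ i, ⨆ c, f i c = ∏ i, f i (b i) := by
            apply Finset.prod_congr rfl; intro i _; exact (hb i).symm
        _ ≤ ⨆ y : ι → β, ∏ i, f i (y i) := aux_le_ciSup (fun y : ι → β => ∏ i, f i (y i)) b
  unfold minEntropy
  rw [hsup, Real.logb_prod _ _ (fun i _ => ne_of_gt (hMpos i)),
    ← Finset.sum_neg_distrib]

end Aux

/-- Let `X = (X₁,…,X_r)` be an `(r,ℓ,Γ)`-total entropy source and let
`N, K, n, k` be positive integers with `N·n = r·ℓ` and `n` a multiple of `ℓ` (say `n = q·ℓ`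
and `r = N·q`). Regroup `X` into `N` consecutive blocks `Y₁,…,Y_N` of `q = n/ℓ` sources
each. If `K·n + N·k ≤ Γ`, then at least `K` of the blocks `Y_j` satisfy `H∞(Y_j) ≥ k`. -/
theorem totalEntropy_to_adversarial
    (r ℓ N K n k q : ℕ) (Γ : ℝ)
    (hℓ : 0 < ℓ) (hN : 0 < N) (hK : 0 < K) (hn : 0 < n) (hk : 0 < k)
    (hq : n = q * ℓ) (hr : r = N * q)
    (Xi : Fin r → ((Fin ℓ → ZMod 2) → ℝ))
    (hXi : ∀ i, IsDist (Xi i))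
    (hΓ : Γ ≤ ∑ i, minEntropy (Xi i))
    (hbound : (K : ℝ) * (n : ℝ) + (N : ℝ) * (k : ℝ) ≤ Γ) :
    ∃ S : Finset (Fin N), K ≤ S.card ∧
      ∀ j ∈ S,
        (k : ℝ) ≤ minEntropy (fun y : Fin q → Fin ℓ → ZMod 2 =>
          ∏ t, Xi (Fin.cast hr.symm (blockIdx N q j t)) (y t)) := by
  classical
  have hq0 : 0 < q := by
    rcases Nat.eq_zero_or_pos q with h | h
    · subst h; simp at hq; omega
    · exact h
  -- The block min-entropies
  set H : Fin N → ℝ := fun j => minEntropy (fun y : Fin q → Fin ℓ → ZMod 2 =>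
    ∏ t, Xi (Fin.cast hr.symm (blockIdx N q j t)) (y t)) with hH
  -- H j equals the sum of min-entropies of its components
  have hHsum : ∀ j, H j = ∑ t, minEntropy (Xi (Fin.cast hr.symm (blockIdx N q j t))) := by
    intro j
    exact aux_minEntropy_prod (fun t => Xi (Fin.cast hr.symm (blockIdx N q j t)))
      (fun t => hXi _)
  -- each component min-entropy is at most ℓ
  have hcomp_le : ∀ i : Fin r, minEntropy (Xi i) ≤ (ℓ : ℝ) := by
    intro i
    have := aux_minEntropy_le_logb_card (Xi i) (hXi i)
    have hcard : (Fintype.card (Fin ℓ → ZMod 2) : ℝ) = 2 ^ ℓ := by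
      simp [Fintype.card_fun]
    rw [hcard, Real.logb_pow, Real.logb_self_eq_one (by norm_num), mul_one] at this
    exact this
  -- block min-entropy is at most n
  have hH_le : ∀ j, H j ≤ (n : ℝ) := by
    intro j
    rw [hHsum j]
    calc ∑ t : Fin q, minEntropy (Xi (Fin.cast hr.symm (blockIdx N q j t)))
        ≤ ∑ _t : Fin q, (ℓ : ℝ) := Finset.sum_le_sum fun t _ => hcomp_le _
      _ = (q : ℝ) * ℓ := by rw [Finset.sum_const, Finset.card_univ, Fintype.card_fin,
          nsmul_eq_mul]
      _ = (n : ℝ) := by rw [hq]; push_cast; ring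
  -- summing block entropies gives the total
  have hsum_eq : ∑ j, H j = ∑ i, minEntropy (Xi i) := by
    have hbij : Function.Bijective
        (fun p : Fin N × Fin q => Fin.cast hr.symm (blockIdx N q p.1 p.2)) := by
      rw [Fintype.bijective_iff_injective_and_card]
      constructor
      · rintro ⟨j1, t1⟩ ⟨j2, t2⟩ hpe
        have he : j1.val * q + t1.val = j2.val * q + t2.val := congrArg Fin.val hpe
        have hj : j1.val = j2.val := by
          have h1 : (j1.val * q + t1.val) / q = j1.val := by
            rw [mul_comm, Nat.mul_add_div hq0, Nat.div_eq_of_lt t1.isLt]; omega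
          have h2 : (j2.val * q + t2.val) / q = j2.val := by
            rw [mul_comm, Nat.mul_add_div hq0, Nat.div_eq_of_lt t2.isLt]; omega
          rw [← h1, ← h2, he]
        have ht : t1.val = t2.val := by
          rw [hj] at he; exact Nat.add_left_cancel he
        exact Prod.ext (Fin.ext hj) (Fin.ext ht)
      · simp [hr]
    calc ∑ j, H j = ∑ j : Fin N, ∑ t : Fin q,
          minEntropy (Xi (Fin.cast hr.symm (blockIdx N q j t))) :=
          Finset.sum_congr rfl fun j _ => hHsum j
      _ = ∑ p : Fin N × Fin q,
          minEntropy (Xi (Fin.cast hr.symm (blockIdx N q p.1 p.2))) :=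
          (Fintype.sum_prod_type (fun p : Fin N × Fin q =>
            minEntropy (Xi (Fin.cast hr.symm (blockIdx N q p.1 p.2))))).symm
      _ = ∑ i, minEntropy (Xi i) :=
          Fintype.sum_bijective _ hbij _ _ fun p => rfl
  -- the set of good blocks
  set S : Finset (Fin N) := Finset.univ.filter (fun j => (k : ℝ) ≤ H j) with hS
  refine ⟨S, ?_, fun j hj => (Finset.mem_filter.mp hj).2⟩
  -- counting argument
  have hsplit : ∑ j, H j = ∑ j ∈ S, H j + ∑ j ∈ Sᶜ, H j :=
    (Finset.sum_add_sum_compl S H).symm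
  have h1 : ∑ j ∈ S, H j ≤ (S.card : ℝ) * n :=
    calc ∑ j ∈ S, H j ≤ ∑ _j ∈ S, (n : ℝ) := Finset.sum_le_sum fun j _ => hH_le j
      _ = (S.card : ℝ) * n := by rw [Finset.sum_const, nsmul_eq_mul]
  have h2 : ∑ j ∈ Sᶜ, H j ≤ (N : ℝ) * k := by
    have hcle : (Sᶜ.card : ℝ) ≤ (N : ℝ) := by
      have := Finset.card_le_univ Sᶜ
      simp only [Finset.card_univ, Fintype.card_fin] at this
      exact_mod_cast this
    calc ∑ j ∈ Sᶜ, H j ≤ ∑ _j ∈ Sᶜ, (k : ℝ) := by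
          apply Finset.sum_le_sum
          intro j hj
          have : ¬ ((k : ℝ) ≤ H j) := by
            simpa [hS] using (Finset.mem_compl.mp hj)
          linarith
      _ = (Sᶜ.card : ℝ) * k := by rw [Finset.sum_const, nsmul_eq_mul]
      _ ≤ (N : ℝ) * k := by
          apply mul_le_mul_of_nonneg_right hcle (by positivity)
  have hfinal : (K : ℝ) * n ≤ (S.card : ℝ) * n := by
    have := hΓ
    rw [← hsum_eq, hsplit] at this
    linarith
  have hn' : (0 : ℝ) < n := by exact_mod_cast hn
  have hKS : (K : ℝ) ≤ (S.card : ℝ) := le_of_mul_le_mul_right hfinal hn'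
  exact_mod_cast hKS
end
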